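/- arXiv:2107.08809 — 7 statements merged into one kernel-verified Lean document; each statement's English description precedes it below -/
import Mathlib

section
/- Let f : ℝ^d → ℝ be differentiable such that for all x, y ∈ ℝ^d: f(y) ≤ f(x) + ∇f(x)ᵀ(y−x) + (L/2)‖x−y‖², f(y) ≥ f(x) + ∇f(x)ᵀ(y−x) + (1/(2L))‖∇f(x) − ∇f(y)‖², and f(y) ≥ f(x) + ∇f(x)ᵀ(y−x) + (μ/2)‖x−y‖², where L ≥ μ ≥ 0 and L > 0. Let η > 0 with 1/η ≥ L, let ρ > 0, fix x_s, λ, x⁰ ∈ ℝ^d, and set x¹ = x⁰ − (1/(1/η + ρ))·[∇f(x⁰) + ρ(x⁰ − x_s) + λ]. Then for every x ∈ ℝ^d and every θ ∈ [0,1]: f(x) − f(x¹) ≥ (x − x¹)ᵀ[ρ(x_s − x¹) − λ] + (1/(2η))‖x − x¹‖² − ((1/η − θμ)/2)‖x⁰ − x‖² + ((1/η − L)/2)‖x¹ − x⁰‖² + ((1−θ)/(2L))‖∇f(x⁰) − ∇f(x)‖². -/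
open scoped RealInnerProductSpace

/-!
The gradient step is the minimiser of the linearised, proximally regularised model, so its
optimality condition expresses `∇f(x⁰)` through `x⁰ - x¹`, `x_s - x¹` and `λ`. Bound `f(x¹)`
from above by the descent lemma at `x⁰`, and `f(x)` from below by the `θ`-convex combination of the
strong-convexity and cocoercivity inequalities at `x⁰`. Subtracting, the only remaining term
`(1/η)⟪x⁰ - x¹, x - x¹⟫` is rewritten by the three-point identity.
-/

section GradientStep

variable {E : Type*} [AddCommGroup E] [Module ℝ E]

noncomputable def gpdmmStep (η ρ : ℝ) (xs lam x0 g : E) : E :=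
  x0 - (1 / (1 / η + ρ)) • (g + ρ • (x0 - xs) + lam)

theorem gpdmmStep_optimality {η ρ : ℝ} (h : 1 / η + ρ ≠ 0) (xs lam x0 g : E) :
    g = (1 / η) • (x0 - gpdmmStep η ρ xs lam x0 g) + ρ • (xs - gpdmmStep η ρ xs lam x0 g)
      - lam := by
  have hstep :
      (1 / η + ρ) • (x0 - gpdmmStep η ρ xs lam x0 g) = g + ρ • (x0 - xs) + lam := by
    rw [gpdmmStep, sub_sub_cancel, smul_smul, mul_one_div_cancel h, one_smul]
  calc g = (1 / η + ρ) • (x0 - gpdmmStep η ρ xs lam x0 g) - ρ • (x0 - xs) - lam := by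
        rw [hstep]; abel
    _ = _ := by module

end GradientStep

section InnerProductSpace

variable {E : Type*} [NormedAddCommGroup E] [InnerProductSpace ℝ E]

theorem two_mul_inner_sub_sub_eq (a b c : E) :
    2 * ⟪a - c, b - c⟫ = ‖a - c‖ ^ 2 + ‖b - c‖ ^ 2 - ‖a - b‖ ^ 2 := by
  have h := norm_sub_sq_real (a - c) (b - c)
  rw [sub_sub_sub_cancel_right] at h
  linarith

theorem inner_sub_sub_le_sub_of_descent {f : E → ℝ} {g x0 x1 x : E} {L B : ℝ}
    (hupper : f x1 ≤ f x0 + ⟪g, x1 - x0⟫ + L / 2 * ‖x0 - x1‖ ^ 2)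
    (hlower : f x0 + ⟪g, x - x0⟫ + B ≤ f x) :
    ⟪g, x - x1⟫ - L / 2 * ‖x0 - x1‖ ^ 2 + B ≤ f x - f x1 := by
  have hsplit : ⟪g, x - x0⟫ = ⟪g, x - x1⟫ + ⟪g, x1 - x0⟫ := by
    rw [← inner_add_right, sub_add_sub_cancel]
  linarith

end InnerProductSpace

theorem gpdmm_one_step_inequality_general {d : ℕ}
    (f : EuclideanSpace ℝ (Fin d) → ℝ)
    (f' : EuclideanSpace ℝ (Fin d) → EuclideanSpace ℝ (Fin d))
    (L μ : ℝ)
    (hdescent : ∀ x y, f y ≤ f x + ⟪f' x, y - x⟫ + L / 2 * ‖x - y‖ ^ 2)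
    (hcoco : ∀ x y, f y ≥ f x + ⟪f' x, y - x⟫ + 1 / (2 * L) * ‖f' x - f' y‖ ^ 2)
    (hstrong : ∀ x y, f y ≥ f x + ⟪f' x, y - x⟫ + μ / 2 * ‖x - y‖ ^ 2)
    (η ρ : ℝ) (hη : 0 < η) (hρ : 0 < ρ)
    (xs lam x0 x1 : EuclideanSpace ℝ (Fin d))
    (hx1 : x1 = x0 - (1 / (1 / η + ρ)) • (f' x0 + ρ • (x0 - xs) + lam)) :
    ∀ x : EuclideanSpace ℝ (Fin d), ∀ θ ∈ Set.Icc (0 : ℝ) 1,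
      f x - f x1 ≥
        ⟪x - x1, ρ • (xs - x1) - lam⟫ + 1 / (2 * η) * ‖x - x1‖ ^ 2
          - (1 / η - θ * μ) / 2 * ‖x0 - x‖ ^ 2
          + (1 / η - L) / 2 * ‖x1 - x0‖ ^ 2
          + (1 - θ) / (2 * L) * ‖f' x0 - f' x‖ ^ 2 := by
  intro x θ ⟨hθ0, hθ1⟩
  have hgrad : f' x0 = (1 / η) • (x0 - x1) + ρ • (xs - x1) - lam := by
    subst hx1
    exact gpdmmStep_optimality (by positivity) xs lam x0 (f' x0)
  have hlower : f x0 + ⟪f' x0, x - x0⟫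
      + (θ * (μ / 2 * ‖x0 - x‖ ^ 2) + (1 - θ) * (1 / (2 * L) * ‖f' x0 - f' x‖ ^ 2)) ≤ f x := by
    have hcomb := convex_Iic (f x - f x0 - ⟪f' x0, x - x0⟫)
      (show μ / 2 * ‖x0 - x‖ ^ 2 ∈ _ from by
        simp only [Set.mem_Iic]; linarith [hstrong x0 x])
      (show 1 / (2 * L) * ‖f' x0 - f' x‖ ^ 2 ∈ _ from by
        simp only [Set.mem_Iic]; linarith [hcoco x0 x])
      hθ0 (sub_nonneg.2 hθ1) (add_sub_cancel θ 1)
    simp only [smul_eq_mul, Set.mem_Iic] at hcomb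
    linarith
  have hinner :
      ⟪f' x0, x - x1⟫ = 1 / η * ⟪x0 - x1, x - x1⟫ + ⟪x - x1, ρ • (xs - x1) - lam⟫ := by
    rw [hgrad, add_sub_assoc, inner_add_left, real_inner_smul_left,
      real_inner_comm (x - x1) (ρ • (xs - x1) - lam)]
  have hstep := inner_sub_sub_le_sub_of_descent (hdescent x0 x1) hlower
  rw [norm_sub_rev x1 x0]
  linear_combination hstep - hinner - 1 / (2 * η) * two_mul_inner_sub_sub_eq x0 x x1

/-- Lemma 1 of the paper: one-step inequality for one GPDMM inner gradient step. -/
theorem gpdmm_one_step_inequality {d : ℕ}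
    (f : EuclideanSpace ℝ (Fin d) → ℝ)
    (f' : EuclideanSpace ℝ (Fin d) → EuclideanSpace ℝ (Fin d))
    (L μ : ℝ) (hL : 0 < L) (hμ : 0 ≤ μ) (hμL : μ ≤ L)
    (hdiff : ∀ x, HasGradientAt f (f' x) x)
    (hdescent : ∀ x y, f y ≤ f x + ⟪f' x, y - x⟫ + L / 2 * ‖x - y‖ ^ 2)
    (hcoco : ∀ x y, f y ≥ f x + ⟪f' x, y - x⟫ + 1 / (2 * L) * ‖f' x - f' y‖ ^ 2)
    (hstrong : ∀ x y, f y ≥ f x + ⟪f' x, y - x⟫ + μ / 2 * ‖x - y‖ ^ 2)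
    (η ρ : ℝ) (hη : 0 < η) (hηL : 1 / η ≥ L) (hρ : 0 < ρ)
    (xs lam x0 x1 : EuclideanSpace ℝ (Fin d))
    (hx1 : x1 = x0 - (1 / (1 / η + ρ)) • (f' x0 + ρ • (x0 - xs) + lam)) :
    ∀ x : EuclideanSpace ℝ (Fin d), ∀ θ ∈ Set.Icc (0 : ℝ) 1,
      f x - f x1 ≥
        ⟪x - x1, ρ • (xs - x1) - lam⟫ + 1 / (2 * η) * ‖x - x1‖ ^ 2
          - (1 / η - θ * μ) / 2 * ‖x0 - x‖ ^ 2
          + (1 / η - L) / 2 * ‖x1 - x0‖ ^ 2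
          + (1 - θ) / (2 * L) * ‖f' x0 - f' x‖ ^ 2 :=
  gpdmm_one_step_inequality_general f f' L μ hdescent hcoco hstrong η ρ hη hρ xs lam x0 x1 hx1
end

section
/- Suppose that, at outer iteration r, the GPDMM iterates x_i^{r,k} (k = 0,…,K), x̄_i^{r,K}, λ_{i|s}^{r+1}, x_s^{r+1}, λ_{s|i}^{r+1}, and at outer iteration r+1 the iterates x_i^{r+1,k}, x̄_i^{r+1,K}, λ_{i|s}^{r+2} are generated by the GPDMM update equations, with 1/η ≥ L. Let (x*, {λ*_{i|s}}) be a KKT point. Then for every θ ∈ [0,1]: ∑_{i=1}^m (1/K)∑_{k=0}^{K−1} ((1/η − θμ)/2)‖x_i^{r,k} − x*‖² + ∑_{i=1}^m (1/(4ρ))‖ρ(x̄_i^{r,K} − x*) + (λ_{i|s}^{r+1} − λ*_{i|s})‖² ≥ ∑_{i=1}^m [ f_i(x̄_i^{r,K}) − (x̄_i^{r,K})ᵀλ*_{i|s} − f_i(x*) + (1/K)∑_{k=0}^{K−1} ( (1/(2η))‖x* − x_i^{r,k+1}‖² + ((1/η − L)/2)‖x_i^{r,k+1} − x_i^{r,k}‖²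 + ((1−θ)/(2L))‖ρ(x_s^r − x_i^{r,k+1}) − λ_{s|i}^r − λ*_{i|s} − (1/η)(x_i^{r,k+1} − x_i^{r,k})‖² ) + (1/(4ρ))‖ρ(x̄_i^{r+1,K} − x*) + (λ_{i|s}^{r+2} − λ*_{i|s})‖² ]. -/
/-!
Each inner step is a gradient step on the augmented Lagrangian, so `∇fᵢ(x^{r,k})` equals the
residual `ρ(x_s − x^{r,k+1}) − λ_{s|i} − (x^{r,k+1} − x^{r,k})/η`. Weighting strong convexity
and cocoercivity at `x*` by `θ` and `1 − θ`, and adding the descent lemma and the three-point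
identity, bounds a single step; averaging over `k` and Jensen's inequality pass to `x̄ᵢ`.
On the server side, polarization turns the cross term into `‖vᵢ‖²` with
`vᵢ = ρ(x̄ᵢ − x*) − (λ_{i|s} − λ*_{i|s})`. The vectors `vᵢ` have mean `ρ(x_s^{r+1} − x*)`
(because `∑ λ*_{i|s} = 0`), and the next dual update reflects each `vᵢ` through that mean,
which leaves `∑ ‖vᵢ‖²` unchanged.
-/

open scoped RealInnerProductSpace

open Finset

section

variable {E : Type*} [NormedAddCommGroup E] [InnerProductSpace ℝ E]

theorem card_mul_le_sum_of_subgradient {ι : Type*} (s : Finset ι) (F : E → ℝ) (x : ι → E)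
    (c g : E) (hc : ∑ i ∈ s, x i = (#s : ℝ) • c) (hg : ∀ y, F c + ⟪g, y - c⟫ ≤ F y) :
    (#s : ℝ) * F c ≤ ∑ i ∈ s, F (x i) := by
  have hmean : ∑ i ∈ s, ⟪g, x i - c⟫ = 0 := by
    rw [← inner_sum, sum_sub_distrib, hc, sum_const, ← Nat.cast_smul_eq_nsmul ℝ, sub_self,
      inner_zero_right]
  calc (#s : ℝ) * F c = ∑ i ∈ s, (F c + ⟪g, x i - c⟫) := by
        rw [sum_add_distrib, hmean, sum_const, nsmul_eq_mul, add_zero]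
    _ ≤ ∑ i ∈ s, F (x i) := sum_le_sum fun i _ => hg (x i)

theorem card_mul_inner_le_sum_inner {ι : Type*} {ρ : ℝ} (hρ : 0 ≤ ρ) (t : Finset ι) (x : ι → E)
    (c xs lam s : E) (hc : ∑ i ∈ t, x i = (#t : ℝ) • c) :
    (#t : ℝ) * ⟪ρ • (c - xs) + lam, c - s⟫ ≤ ∑ i ∈ t, ⟪ρ • (x i - xs) + lam, x i - s⟫ := by
  refine card_mul_le_sum_of_subgradient t (fun y => ⟪ρ • (y - xs) + lam, y - s⟫) x c
    (ρ • (c - xs) + lam + ρ • (c - s)) hc fun y => ?_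
  have hgap : ⟪ρ • (y - xs) + lam, y - s⟫ - ⟪ρ • (c - xs) + lam, c - s⟫
      - ⟪ρ • (c - xs) + lam + ρ • (c - s), y - c⟫ = ρ * ‖y - c‖ ^ 2 := by
    rw [← real_inner_self_eq_norm_sq]
    simp only [inner_add_left, inner_sub_left, inner_sub_right,
      real_inner_smul_right, real_inner_comm]
    ring
  nlinarith [mul_nonneg hρ (sq_nonneg ‖y - c‖)]

theorem sum_norm_sq_two_smul_sub {ι : Type*} (t : Finset ι) (v : ι → E) (c : E)
    (hv : ∑ i ∈ t, v i = (#t : ℝ) • c) :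
    ∑ i ∈ t, ‖(2 : ℝ) • c - v i‖ ^ 2 = ∑ i ∈ t, ‖v i‖ ^ 2 := by
  simp only [norm_sub_sq_real, sum_add_distrib, sum_sub_distrib, ← mul_sum, ← inner_sum, hv,
    sum_const, nsmul_eq_mul, norm_smul, real_inner_smul_left, real_inner_smul_right,
    real_inner_self_eq_norm_sq, Real.norm_two]
  ring

theorem card_smul_one_div_card_smul_sum {ι : Type*} [Fintype ι] (w : ι → E) :
    (Fintype.card ι : ℝ) • ((1 / (Fintype.card ι : ℝ)) • ∑ i, w i) = ∑ i, w i := by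
  rcases isEmpty_or_nonempty ι with hι | hι
  · simp
  · rw [smul_smul, mul_one_div_cancel (by positivity), one_smul]

namespace GPDMM

theorem grad_eq_of_inner_update {η ρ : ℝ} (hηρ : 1 / η + ρ ≠ 0) {g a b xs lam : E}
    (hupd : b = a - (1 / (1 / η + ρ)) • (g + ρ • (a - xs) + lam)) :
    g = ρ • (xs - b) - lam - (1 / η) • (b - a) := by
  have hscaled : (1 / η + ρ) • (a - b) = g + ρ • (a - xs) + lam := by
    rw [hupd, sub_sub_cancel, smul_smul, mul_one_div_cancel hηρ, one_smul]
  have hg : g = (1 / η + ρ) • (a - b) - ρ • (a - xs) - lam := by rw [hscaled]; abel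
  rw [hg]
  module

theorem inner_step_bound {F : E → ℝ} {L μ η ρ θ : ℝ} (hθ : θ ∈ Set.Icc (0 : ℝ) 1)
    {g gs a b s xs lam : E} (hg : g = ρ • (xs - b) - lam - (1 / η) • (b - a))
    (hstrong : F s ≥ F a + ⟪g, s - a⟫ + μ / 2 * ‖a - s‖ ^ 2)
    (hcoco : F s ≥ F a + ⟪g, s - a⟫ + 1 / (2 * L) * ‖g - gs‖ ^ 2)
    (hdescent : F b ≤ F a + ⟪g, b - a⟫ + L / 2 * ‖a - b‖ ^ 2) :
    (1 / η - θ * μ) / 2 * ‖a - s‖ ^ 2 ≥ F b - F s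
      + (1 / (2 * η) * ‖s - b‖ ^ 2 + (1 / η - L) / 2 * ‖b - a‖ ^ 2
        + (1 - θ) / (2 * L) * ‖ρ • (xs - b) - lam - gs - (1 / η) • (b - a)‖ ^ 2)
      + ⟪ρ • (b - xs) + lam, b - s⟫ := by
  obtain ⟨hθ0, hθ1⟩ := hθ
  have hresidual : ρ • (xs - b) - lam - gs - (1 / η) • (b - a) = g - gs := by rw [hg]; abel
  have hthree_point : ‖a - s‖ ^ 2 = ‖a - b‖ ^ 2 + 2 * ⟪a - b, b - s⟫ + ‖b - s‖ ^ 2 := by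
    rw [← norm_add_sq_real, sub_add_sub_cancel]
  have hgrad : ⟪g, b - s⟫ + ⟪ρ • (b - xs) + lam, b - s⟫
      = 1 / (2 * η) * (‖a - s‖ ^ 2 - ‖a - b‖ ^ 2 - ‖b - s‖ ^ 2) := by
    rw [hthree_point, hg]
    simp only [inner_sub_left, inner_add_left, real_inner_smul_left]
    ring
  have hsplit : ⟪g, b - s⟫ = ⟪g, b - a⟫ - ⟪g, s - a⟫ := by
    rw [← inner_sub_right, sub_sub_sub_cancel_right]
  have hθstrong : 0 ≤ θ * (F s - F a - ⟪g, s - a⟫ - μ / 2 * ‖a - s‖ ^ 2) :=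
    mul_nonneg hθ0 (by linarith)
  have hθcoco : 0 ≤ (1 - θ) * (F s - F a - ⟪g, s - a⟫ - 1 / (2 * L) * ‖g - gs‖ ^ 2) :=
    mul_nonneg (by linarith) (by linarith)
  rw [hresidual, norm_sub_rev s b, norm_sub_rev b a]
  ring_nf at hgrad hsplit hθstrong hθcoco hdescent ⊢
  linarith

theorem client_average_bound {F : E → ℝ} {G : E → E} {L μ η ρ θ : ℝ} (hμ : 0 ≤ μ) (hη : 0 < η)
    (hρ : 0 ≤ ρ) (hθ : θ ∈ Set.Icc (0 : ℝ) 1)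
    (hdescent : ∀ x y, F y ≤ F x + ⟪G x, y - x⟫ + L / 2 * ‖x - y‖ ^ 2)
    (hcoco : ∀ x y, F y ≥ F x + ⟪G x, y - x⟫ + 1 / (2 * L) * ‖G x - G y‖ ^ 2)
    (hstrong : ∀ x y, F y ≥ F x + ⟪G x, y - x⟫ + μ / 2 * ‖x - y‖ ^ 2)
    {K : ℕ} (hK : 0 < K) (x : ℕ → E) (xbar xs lam s : E)
    (hupd : ∀ k < K, x (k + 1) = x k - (1 / (1 / η + ρ)) • (G (x k) + ρ • (x k - xs) + lam))
    (hxbar : xbar = (1 / (K : ℝ)) • ∑ k ∈ range K, x (k + 1)) :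
    (1 / (K : ℝ)) * ∑ k ∈ range K, (1 / η - θ * μ) / 2 * ‖x k - s‖ ^ 2 ≥
      F xbar - F s
        + (1 / (K : ℝ)) * ∑ k ∈ range K,
            (1 / (2 * η) * ‖s - x (k + 1)‖ ^ 2 + (1 / η - L) / 2 * ‖x (k + 1) - x k‖ ^ 2
              + (1 - θ) / (2 * L) *
                  ‖ρ • (xs - x (k + 1)) - lam - G s - (1 / η) • (x (k + 1) - x k)‖ ^ 2)
        + ⟪ρ • (xbar - xs) + lam, xbar - s⟫ := by
  have hKpos : (0 : ℝ) < K := Nat.cast_pos.mpr hK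
  have hsum : ∑ k ∈ range K, x (k + 1) = (#(range K) : ℝ) • xbar := by
    rw [card_range, hxbar, smul_smul, mul_one_div_cancel hKpos.ne', one_smul]
  have hsteps := sum_le_sum fun k hk => (inner_step_bound hθ
    (grad_eq_of_inner_update (by positivity) (hupd k (mem_range.mp hk)))
    (hstrong (x k) s) (hcoco (x k) s) (hdescent (x k) (x (k + 1)))).le
  have hjensen := card_mul_le_sum_of_subgradient _ F _ xbar (G xbar) hsum fun y => by
    nlinarith [hstrong xbar y, mul_nonneg hμ (sq_nonneg ‖xbar - y‖)]
  have hjensen' := card_mul_inner_le_sum_inner hρ _ _ xbar xs lam s hsum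
  rw [sum_add_distrib, sum_add_distrib, sum_sub_distrib, sum_const, card_range, nsmul_eq_mul]
    at hsteps
  rw [card_range] at hjensen hjensen'
  set D := ∑ k ∈ range K, (1 / (2 * η) * ‖s - x (k + 1)‖ ^ 2
    + (1 / η - L) / 2 * ‖x (k + 1) - x k‖ ^ 2
    + (1 - θ) / (2 * L) * ‖ρ • (xs - x (k + 1)) - lam - G s - (1 / η) • (x (k + 1) - x k)‖ ^ 2)
  have htotal : (K : ℝ) * (F xbar - F s + ⟪ρ • (xbar - xs) + lam, xbar - s⟫) + D
      ≤ ∑ k ∈ range K, (1 / η - θ * μ) / 2 * ‖x k - s‖ ^ 2 := by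
    linarith
  calc F xbar - F s + 1 / (K : ℝ) * D + ⟪ρ • (xbar - xs) + lam, xbar - s⟫
      = 1 / (K : ℝ) * ((K : ℝ) * (F xbar - F s + ⟪ρ • (xbar - xs) + lam, xbar - s⟫) + D) := by
        field_simp
        ring
    _ ≤ _ := by gcongr

theorem server_dual_identity {ι : Type*} [Fintype ι] {ρ : ℝ} (hρ : ρ ≠ 0) (xs xs' xstar : E)
    (xbar xbar' lamsi lamsi' lamis lamis' lamstar : ι → E)
    (hlamis : ∀ i, lamis i = ρ • (xs - xbar i) - lamsi i)
    (hxs' : xs' = (1 / (Fintype.card ι : ℝ)) • ∑ i, (xbar i - (1 / ρ) • lamis i))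
    (hlamsi' : ∀ i, lamsi' i = ρ • (xbar i - xs') - lamis i)
    (hlamis' : ∀ i, lamis' i = ρ • (xs' - xbar' i) - lamsi' i)
    (hlamstar : ∑ i, lamstar i = 0) :
    ∑ i, (⟪ρ • (xbar i - xs) + lamsi i, xbar i - xstar⟫
        + 1 / (4 * ρ) * ‖ρ • (xbar i - xstar) + (lamis i - lamstar i)‖ ^ 2)
      = ∑ i, (1 / (4 * ρ) * ‖ρ • (xbar' i - xstar) + (lamis' i - lamstar i)‖ ^ 2
        - ⟪xbar i, lamstar i⟫) := by
  have hpolar : ∀ i, ⟪ρ • (xbar i - xs) + lamsi i, xbar i - xstar⟫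
      + 1 / (4 * ρ) * ‖ρ • (xbar i - xstar) + (lamis i - lamstar i)‖ ^ 2
      = 1 / (4 * ρ) * ‖ρ • (xbar i - xstar) - (lamis i - lamstar i)‖ ^ 2
        + ⟪xstar, lamstar i⟫ - ⟪xbar i, lamstar i⟫ := by
    intro i
    have hdual : ρ • (xbar i - xs) + lamsi i = -lamis i := by rw [hlamis i]; module
    have hcross : ⟪-lamis i, xbar i - xstar⟫ = ⟪xstar, lamstar i⟫ - ⟪xbar i, lamstar i⟫
        - ⟪xbar i - xstar, lamis i - lamstar i⟫ := by
      simp only [inner_neg_left, inner_sub_left, inner_sub_right, real_inner_comm]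
      ring
    rw [hdual, hcross, norm_add_sq_real (ρ • (xbar i - xstar)),
      norm_sub_sq_real (ρ • (xbar i - xstar)), real_inner_smul_left]
    field_simp
    ring
  set v := fun i => ρ • (xbar i - xstar) - (lamis i - lamstar i)
  have hreflect : ∀ i, ρ • (xbar' i - xstar) + (lamis' i - lamstar i)
      = (2 : ℝ) • (ρ • (xs' - xstar)) - v i := by
    intro i
    simp only [v, hlamis' i, hlamsi' i]
    module
  have hmean : ∑ i, v i = (#(univ : Finset ι) : ℝ) • (ρ • (xs' - xstar)) := by
    have hv : ∀ i, v i = ρ • (xbar i - (1 / ρ) • lamis i) - ρ • xstar + lamstar i := by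
      intro i
      simp only [v, smul_sub, smul_smul, mul_one_div_cancel hρ, one_smul]
      abel
    rw [sum_congr rfl fun i _ => hv i, sum_add_distrib, sum_sub_distrib, ← smul_sum,
      ← card_smul_one_div_card_smul_sum (fun i => xbar i - (1 / ρ) • lamis i), ← hxs',
      hlamstar, sum_const, card_univ]
    module
  rw [sum_congr rfl fun i _ => hpolar i]
  simp only [hreflect, sum_add_distrib, sum_sub_distrib, ← mul_sum,
    sum_norm_sq_two_smul_sub _ _ _ hmean, ← inner_sum, hlamstar, inner_zero_right]
  ring

end GPDMM

end

theorem gpdmm_lemma2_general {d m K : ℕ} (hK : 1 ≤ K)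
    (f : Fin m → EuclideanSpace ℝ (Fin d) → ℝ)
    (f' : Fin m → EuclideanSpace ℝ (Fin d) → EuclideanSpace ℝ (Fin d))
    (L μ : ℝ) (hμ : 0 ≤ μ)
    (hdescent : ∀ i x y, f i y ≤ f i x + ⟪f' i x, y - x⟫ + L / 2 * ‖x - y‖ ^ 2)
    (hcoco : ∀ i x y, f i y ≥ f i x + ⟪f' i x, y - x⟫ + 1 / (2 * L) * ‖f' i x - f' i y‖ ^ 2)
    (hstrong : ∀ i x y, f i y ≥ f i x + ⟪f' i x, y - x⟫ + μ / 2 * ‖x - y‖ ^ 2)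
    (η ρ : ℝ) (hη : 0 < η) (hρ : 0 < ρ)
    -- iterates at outer iterations r and r+1
    (xsr xsr1 : EuclideanSpace ℝ (Fin d))
    (xiR : Fin m → ℕ → EuclideanSpace ℝ (Fin d))
    (xbarR xbarR1 : Fin m → EuclideanSpace ℝ (Fin d))
    (lamsiR lamsiR1 lamisR1 lamisR2 : Fin m → EuclideanSpace ℝ (Fin d))
    (hinnerR : ∀ i, ∀ k < K, xiR i (k + 1) =
      xiR i k - (1 / (1 / η + ρ)) • (f' i (xiR i k) + ρ • (xiR i k - xsr) + lamsiR i))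
    (hxbarR : ∀ i, xbarR i = (1 / (K : ℝ)) • ∑ k ∈ Finset.range K, xiR i (k + 1))
    (hlamisR1 : ∀ i, lamisR1 i = ρ • (xsr - xbarR i) - lamsiR i)
    (hxsr1 : xsr1 = (1 / (m : ℝ)) • ∑ i, (xbarR i - (1 / ρ) • lamisR1 i))
    (hlamsiR1 : ∀ i, lamsiR1 i = ρ • (xbarR i - xsr1) - lamisR1 i)
    (hlamisR2 : ∀ i, lamisR2 i = ρ • (xsr1 - xbarR1 i) - lamsiR1 i)
    -- KKT point
    (xstar : EuclideanSpace ℝ (Fin d)) (lamstar : Fin m → EuclideanSpace ℝ (Fin d))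
    (hKKTgrad : ∀ i, f' i xstar = lamstar i)
    (hKKTsum : ∑ i, lamstar i = 0) :
    ∀ θ ∈ Set.Icc (0 : ℝ) 1,
      ∑ i, (1 / (K : ℝ)) * ∑ k ∈ Finset.range K,
            (1 / η - θ * μ) / 2 * ‖xiR i k - xstar‖ ^ 2
        + ∑ i, 1 / (4 * ρ) * ‖ρ • (xbarR i - xstar) + (lamisR1 i - lamstar i)‖ ^ 2
      ≥ ∑ i,
          (f i (xbarR i) - ⟪xbarR i, lamstar i⟫ - f i xstar
            + (1 / (K : ℝ)) * ∑ k ∈ Finset.range K,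
                (1 / (2 * η) * ‖xstar - xiR i (k + 1)‖ ^ 2
                  + (1 / η - L) / 2 * ‖xiR i (k + 1) - xiR i k‖ ^ 2
                  + (1 - θ) / (2 * L) *
                      ‖ρ • (xsr - xiR i (k + 1)) - lamsiR i - lamstar i
                        - (1 / η) • (xiR i (k + 1) - xiR i k)‖ ^ 2)
            + 1 / (4 * ρ) * ‖ρ • (xbarR1 i - xstar) + (lamisR2 i - lamstar i)‖ ^ 2) := by
  intro θ hθ
  have hclient := fun i => hKKTgrad i ▸ GPDMM.client_average_bound hμ hη hρ.le hθ (hdescent i)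
    (hcoco i) (hstrong i) hK (xiR i) (xbarR i) xsr (lamsiR i) xstar (hinnerR i) (hxbarR i)
  have hdual := GPDMM.server_dual_identity hρ.ne' xsr xsr1 xstar xbarR xbarR1 lamsiR lamsiR1
    lamisR1 lamisR2 lamstar hlamisR1 (by rwa [Fintype.card_fin]) hlamsiR1 hlamisR2 hKKTsum
  have hsum := sum_le_sum fun i (_ : i ∈ univ) => (hclient i).le
  simp only [sum_add_distrib, sum_sub_distrib] at hsum hdual ⊢
  linarith

/-- Lemma 2 of the paper: the key inequality for the GPDMM iterates at two consecutive
outer iterations `r` and `r+1`. -/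
theorem gpdmm_lemma2 {d m K : ℕ} (hm : 0 < m) (hK : 1 ≤ K)
    (f : Fin m → EuclideanSpace ℝ (Fin d) → ℝ)
    (f' : Fin m → EuclideanSpace ℝ (Fin d) → EuclideanSpace ℝ (Fin d))
    (L μ : ℝ) (hL : 0 < L) (hμ : 0 ≤ μ) (hμL : μ ≤ L)
    (hdiff : ∀ i x, HasGradientAt (f i) (f' i x) x)
    (hdescent : ∀ i x y, f i y ≤ f i x + ⟪f' i x, y - x⟫ + L / 2 * ‖x - y‖ ^ 2)
    (hcoco : ∀ i x y, f i y ≥ f i x + ⟪f' i x, y - x⟫ + 1 / (2 * L) * ‖f' i x - f' i y‖ ^ 2)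
    (hstrong : ∀ i x y, f i y ≥ f i x + ⟪f' i x, y - x⟫ + μ / 2 * ‖x - y‖ ^ 2)
    (η ρ : ℝ) (hη : 0 < η) (hηL : 1 / η ≥ L) (hρ : 0 < ρ)
    -- iterates at outer iterations r and r+1
    (xsr xsr1 : EuclideanSpace ℝ (Fin d))
    (xiR xiR1 : Fin m → ℕ → EuclideanSpace ℝ (Fin d))
    (xbarR xbarR1 : Fin m → EuclideanSpace ℝ (Fin d))
    (lamsiR lamsiR1 lamisR1 lamisR2 : Fin m → EuclideanSpace ℝ (Fin d))
    (hinnerR : ∀ i, ∀ k < K, xiR i (k + 1) =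
      xiR i k - (1 / (1 / η + ρ)) • (f' i (xiR i k) + ρ • (xiR i k - xsr) + lamsiR i))
    (hxbarR : ∀ i, xbarR i = (1 / (K : ℝ)) • ∑ k ∈ Finset.range K, xiR i (k + 1))
    (hlamisR1 : ∀ i, lamisR1 i = ρ • (xsr - xbarR i) - lamsiR i)
    (hxsr1 : xsr1 = (1 / (m : ℝ)) • ∑ i, (xbarR i - (1 / ρ) • lamisR1 i))
    (hlamsiR1 : ∀ i, lamsiR1 i = ρ • (xbarR i - xsr1) - lamisR1 i)
    (hinitR1 : ∀ i, xiR1 i 0 = xiR i K)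
    (hinnerR1 : ∀ i, ∀ k < K, xiR1 i (k + 1) =
      xiR1 i k - (1 / (1 / η + ρ)) • (f' i (xiR1 i k) + ρ • (xiR1 i k - xsr1) + lamsiR1 i))
    (hxbarR1 : ∀ i, xbarR1 i = (1 / (K : ℝ)) • ∑ k ∈ Finset.range K, xiR1 i (k + 1))
    (hlamisR2 : ∀ i, lamisR2 i = ρ • (xsr1 - xbarR1 i) - lamsiR1 i)
    -- KKT point
    (xstar : EuclideanSpace ℝ (Fin d)) (lamstar : Fin m → EuclideanSpace ℝ (Fin d))
    (hKKTgrad : ∀ i, f' i xstar = lamstar i)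
    (hKKTsum : ∑ i, lamstar i = 0) :
    ∀ θ ∈ Set.Icc (0 : ℝ) 1,
      ∑ i, (1 / (K : ℝ)) * ∑ k ∈ Finset.range K,
            (1 / η - θ * μ) / 2 * ‖xiR i k - xstar‖ ^ 2
        + ∑ i, 1 / (4 * ρ) * ‖ρ • (xbarR i - xstar) + (lamisR1 i - lamstar i)‖ ^ 2
      ≥ ∑ i,
          (f i (xbarR i) - ⟪xbarR i, lamstar i⟫ - f i xstar
            + (1 / (K : ℝ)) * ∑ k ∈ Finset.range K,
                (1 / (2 * η) * ‖xstar - xiR i (k + 1)‖ ^ 2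
                  + (1 / η - L) / 2 * ‖xiR i (k + 1) - xiR i k‖ ^ 2
                  + (1 - θ) / (2 * L) *
                      ‖ρ • (xsr - xiR i (k + 1)) - lamsiR i - lamstar i
                        - (1 / η) • (xiR i (k + 1) - xiR i k)‖ ^ 2)
            + 1 / (4 * ρ) * ‖ρ • (xbarR1 i - xstar) + (lamisR2 i - lamstar i)‖ ^ 2) :=
  gpdmm_lemma2_general hK f f' L μ hμ hdescent hcoco hstrong η ρ hη hρ xsr xsr1 xiR xbarR xbarR1
    lamsiR lamsiR1 lamisR1 lamisR2 hinnerR hxbarR hlamisR1 hxsr1 hlamsiR1 hlamisR2 xstar lamstar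
    hKKTgrad hKKTsum
end

section
/- Suppose the GPDMM iterates are generated by the GPDMM update equations for all outer iterations r ≥ 1, with 1/η > L ≥ μ > 0, and let (x*, {λ*_{i|s}}) be a KKT point. Fix θ ∈ (0,1) and φ ∈ (0,1) with θμφ/(4ρ²) < 1/(4ρ). Define γ₁ = min( (1−θ)/(2Lη²), (1/η − L)/2 ), γ₂ = min( θμφ/(2ρ²), γ₁η²/2 ), and for r ≥ 1 let Q^r = ∑_{i=1}^m [ ((1/η − θμ)/(2K))‖x_i^{r−1,K} − x*‖² + (1/(4ρ) − γ₂/2)‖ρ(x̄_i^{r,K} − x*) + (λ_{i|s}^{r+1} − λ*_{i|s})‖² ]. Then Q^{r+1} ≤ β Q^r for all r ≥ 1, where β = max( (1/(4ρ) − γ₂/2)/(1/(4ρ)), (1/η − θμ)/(1/η − θμφ) ) and 0 < β < 1. -/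
/-!
Write `vᵢ = ρ x_s^r - λ_{s|i}^r` and `vᵢ* = ρ x* + λ*_{i|s}`. The inner loop of client `i`
takes proximal steps of weight `1/η` on `fᵢ + (ρ/2)‖·‖² - ⟪vᵢ, ·⟫` with `fᵢ` linearized.
Smoothness, strong convexity and cocoercivity give a one-step inequality that telescopes over
the `K` inner steps; with Jensen's inequality for the average `x̄ᵢ` it contracts the client's
part of `Q`, with `vᵢ - vᵢ*` replaced by the reflected residual `wᵢ = 2ρ(x̄ᵢ - x*) - (vᵢ - vᵢ*)`.
The server update gives `vᵢ^{r+1} - vᵢ* = (2/m) ∑ⱼ wⱼ - wᵢ`, the reflection through the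
consensus subspace, which preserves `∑ᵢ ‖·‖²`; so the client contractions add up to
`Q^{r+1} ≤ β Q^r`.
-/

open scoped RealInnerProductSpace

open Finset

lemma norm_sum_sq_le_card_mul {E ι : Type*} [SeminormedAddCommGroup E] (s : Finset ι) (y : ι → E) :
    ‖∑ i ∈ s, y i‖ ^ 2 ≤ #s * ∑ i ∈ s, ‖y i‖ ^ 2 :=
  (pow_le_pow_left₀ (norm_nonneg _) (norm_sum_le s y) 2).trans sq_sum_le_card_mul_sum_sq

lemma card_mul_norm_sq_le_sum_norm_sq_of_sum_eq {E ι : Type*} [SeminormedAddCommGroup E]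
    [NormedSpace ℝ E] {s : Finset ι} {y : ι → E} {z : E} (h : ∑ i ∈ s, y i = (#s : ℝ) • z) :
    #s * ‖z‖ ^ 2 ≤ ∑ i ∈ s, ‖y i‖ ^ 2 := by
  have hsq := norm_sum_sq_le_card_mul s y
  rw [h, norm_smul, Real.norm_natCast, mul_pow, sq (#s : ℝ), mul_assoc] at hsq
  rcases (Nat.cast_nonneg (α := ℝ) #s).eq_or_lt with hs | hs
  · rw [← hs, zero_mul]
    positivity
  · exact le_of_mul_le_mul_left hsq hs

lemma norm_add_add_sq_le {E : Type*} [SeminormedAddCommGroup E] (a b c : E) :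
    ‖a + b + c‖ ^ 2 ≤ 2 * ‖a‖ ^ 2 + 4 * ‖b‖ ^ 2 + 4 * ‖c‖ ^ 2 := by
  have h : ‖a + b + c‖ ≤ ‖a‖ + ‖b‖ + ‖c‖ := norm_add₃_le
  nlinarith [norm_nonneg (a + b + c), sq_nonneg (‖a‖ - ‖b‖ - ‖c‖), sq_nonneg (‖b‖ - ‖c‖)]

lemma sum_range_add_le_of_forall_add_le {u a w : ℕ → ℝ} {n : ℕ}
    (h : ∀ k < n, u k + a (k + 1) ≤ a k + w k) :
    ∑ k ∈ range n, u k + a n ≤ a 0 + ∑ k ∈ range n, w k := by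
  have hsum := sum_le_sum fun k hk => h k (mem_range.1 hk)
  rw [sum_add_distrib, sum_add_distrib] at hsum
  have htele := sum_range_sub a n
  rw [sum_sub_distrib] at htele
  linarith

lemma eq_of_gradient_update {E : Type*} [AddCommGroup E] [Module ℝ E] {α ρ : ℝ}
    (hαρ : α + ρ ≠ 0) {g x x' xs lam : E}
    (h : x' = x - (1 / (α + ρ)) • (g + ρ • (x - xs) + lam)) :
    g = α • (x - x') - ρ • x' + (ρ • xs - lam) := by
  have hscaled : (α + ρ) • (x - x') = g + ρ • (x - xs) + lam := by
    rw [h, sub_sub_cancel, smul_smul, mul_one_div_cancel hαρ, one_smul]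
  linear_combination (norm := module) -hscaled

lemma gpdmm_dual_reflection {E ι : Type*} [AddCommGroup E] [Module ℝ E] [Fintype ι] {ρ : ℝ}
    (hρ : ρ ≠ 0) {xbar xbar' lam lam' lamsi' lamstar : ι → E} {xs' xstar : E}
    (hxs : xs' = (1 / (Fintype.card ι : ℝ)) • ∑ j, (xbar j - (1 / ρ) • lam j))
    (hlamsi : ∀ j, lamsi' j = ρ • (xbar j - xs') - lam j)
    (hlam' : ∀ j, lam' j = ρ • (xs' - xbar' j) - lamsi' j)
    (hsum : ∑ j, lamstar j = 0) (i : ι) :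
    ρ • (xbar' i - xstar) + (lam' i - lamstar i)
      = (2 / (Fintype.card ι : ℝ)) • ∑ j, (ρ • (xbar j - xstar) - (lam j - lamstar j))
        - (ρ • (xbar i - xstar) - (lam i - lamstar i)) := by
  have hn : (Fintype.card ι : ℝ) ≠ 0 :=
    have : Nonempty ι := ⟨i⟩
    Nat.cast_ne_zero.2 Fintype.card_ne_zero
  have hmean : (Fintype.card ι : ℝ) • xs' = ∑ j, xbar j - (1 / ρ) • ∑ j, lam j := by
    rw [hxs, smul_smul, mul_one_div_cancel hn, one_smul, sum_sub_distrib, smul_sum]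
  have hsum' : ∑ j, (ρ • (xbar j - xstar) - (lam j - lamstar j))
      = (Fintype.card ι : ℝ) • (ρ • (xs' - xstar)) := by
    rw [smul_comm, smul_sub, hmean]
    simp only [sum_sub_distrib, ← smul_sum, hsum, sum_const, card_univ, smul_sub, smul_smul,
      mul_one_div_cancel hρ, one_smul]
    module
  rw [hsum', smul_smul, div_mul_cancel₀ _ hn, hlam', hlamsi]
  module

section InnerProductSpace

variable {E : Type*} [NormedAddCommGroup E] [InnerProductSpace ℝ E]

lemma sum_norm_sq_two_div_card_smul_sum_sub {ι : Type*} [Fintype ι] (e : ι → E) :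
    ∑ i, ‖(2 / (Fintype.card ι : ℝ)) • ∑ j, e j - e i‖ ^ 2 = ∑ i, ‖e i‖ ^ 2 := by
  set n : ℝ := (Fintype.card ι : ℝ)
  have hexpand : ∀ i, ‖(2 / n) • ∑ j, e j - e i‖ ^ 2
      = (2 / n) ^ 2 * ‖∑ j, e j‖ ^ 2 - 2 * (2 / n) * ⟪∑ j, e j, e i⟫ + ‖e i‖ ^ 2 := fun i => by
    rw [norm_sub_sq_real, norm_smul, real_inner_smul_left, Real.norm_eq_abs, mul_pow, sq_abs]
    ring
  simp only [hexpand, sum_add_distrib, sum_sub_distrib, ← mul_sum, ← inner_sum,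
    real_inner_self_eq_norm_sq, sum_const, card_univ, nsmul_eq_mul]
  rcases eq_or_ne n 0 with hn | hn
  · simp [hn]
  · field_simp
    ring

lemma norm_sq_le_of_step {α ρ : ℝ} {g gstar x x' v xstar : E}
    (hstep : g = α • (x - x') - ρ • x' + v) :
    ‖v - (ρ • xstar + gstar)‖ ^ 2
      ≤ 2 * ρ ^ 2 * ‖x' - xstar‖ ^ 2 + 4 * ‖g - gstar‖ ^ 2 + 4 * α ^ 2 * ‖x - x'‖ ^ 2 := by
  have hres : v - (ρ • xstar + gstar) = ρ • (x' - xstar) + (g - gstar) + (-α) • (x - x') := by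
    rw [hstep]; module
  have h := norm_add_add_sq_le (ρ • (x' - xstar)) (g - gstar) ((-α) • (x - x'))
  rwa [← hres, norm_smul, norm_smul, Real.norm_eq_abs, Real.norm_eq_abs, abs_neg, mul_pow,
    mul_pow, sq_abs, sq_abs, ← mul_assoc, ← mul_assoc] at h

lemma sum_le_mul_sum_of_reflection {ι : Type*} [Fintype ι] {A A' B C β : ℝ} {a a' : ι → ℝ}
    {δ δ' w : ι → E} (hβ : 0 ≤ β) (hA : A ≤ β * A') (hB : B ≤ β * C) (ha' : ∀ i, 0 ≤ a' i)
    (hreflect : ∀ i, δ' i = (2 / (Fintype.card ι : ℝ)) • ∑ j, w j - w i)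
    (hlocal : ∀ i, A' * a' i + C * ‖w i‖ ^ 2 ≤ A * a i + B * ‖δ i‖ ^ 2) :
    ∑ i, (A * a' i + B * ‖δ' i‖ ^ 2) ≤ β * ∑ i, (A * a i + B * ‖δ i‖ ^ 2) := by
  calc ∑ i, (A * a' i + B * ‖δ' i‖ ^ 2) = ∑ i, (A * a' i + B * ‖w i‖ ^ 2) := by
        simp only [sum_add_distrib, ← mul_sum, hreflect, sum_norm_sq_two_div_card_smul_sum_sub]
    _ ≤ ∑ i, β * (A' * a' i + C * ‖w i‖ ^ 2) := sum_le_sum fun i _ => by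
        linear_combination mul_le_mul_of_nonneg_right hA (ha' i)
          + mul_le_mul_of_nonneg_right hB (sq_nonneg ‖w i‖)
    _ ≤ β * ∑ i, (A * a i + B * ‖δ i‖ ^ 2) := by
        rw [← mul_sum]
        exact mul_le_mul_of_nonneg_left (sum_le_sum fun i _ => hlocal i) hβ

structure IsSmoothStronglyConvex (f : E → ℝ) (f' : E → E) (L μ : ℝ) : Prop where
  le_descent : ∀ x y, f y ≤ f x + ⟪f' x, y - x⟫ + L / 2 * ‖x - y‖ ^ 2
  cocoercive : ∀ x y, f y ≥ f x + ⟪f' x, y - x⟫ + 1 / (2 * L) * ‖f' x - f' y‖ ^ 2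
  strongly_convex : ∀ x y, f y ≥ f x + ⟪f' x, y - x⟫ + μ / 2 * ‖x - y‖ ^ 2

namespace IsSmoothStronglyConvex

variable {f : E → ℝ} {f' : E → E} {L μ θ φ α ρ γ : ℝ}

lemma le_inner_grad_sub_grad (hf : IsSmoothStronglyConvex f f' L μ) (hμ : 0 ≤ μ) (hθ0 : 0 ≤ θ)
    (hθ1 : θ ≤ 1) (x y z : E) :
    θ * μ / 2 * ‖x - z‖ ^ 2 + (1 - θ) / (2 * L) * ‖f' x - f' z‖ ^ 2 - L / 2 * ‖x - y‖ ^ 2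
      ≤ ⟪f' x - f' z, y - z⟫ := by
  have hsplit : ⟪f' x - f' z, y - z⟫ = ⟪f' x, y - x⟫ - ⟪f' x, z - x⟫ - ⟪f' z, y - z⟫ := by
    rw [inner_sub_left, show y - z = (y - x) - (z - x) by abel, inner_sub_right]
  have hstrong := mul_le_mul_of_nonneg_left (hf.strongly_convex x z) hθ0
  have hcoco := mul_le_mul_of_nonneg_left (hf.cocoercive x z) (sub_nonneg.2 hθ1)
  rw [hsplit]
  linear_combination hstrong + hcoco + hf.le_descent x y + hf.strongly_convex z y
    + 1 / 2 * mul_nonneg hμ (sq_nonneg ‖z - y‖)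

lemma step_estimate (hf : IsSmoothStronglyConvex f f' L μ) (hμ : 0 ≤ μ) (hθ0 : 0 ≤ θ)
    (hθ1 : θ ≤ 1) {x x' v xstar : E} (hstep : f' x = α • (x - x') - ρ • x' + v) :
    (ρ + α / 2) * ‖x' - xstar‖ ^ 2 + (α - L) / 2 * ‖x - x'‖ ^ 2
        + (1 - θ) / (2 * L) * ‖f' x - f' xstar‖ ^ 2
      ≤ (α - θ * μ) / 2 * ‖x - xstar‖ ^ 2 + ⟪v - (ρ • xstar + f' xstar), x' - xstar⟫ := by
  have hgrad : f' x - f' xstar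
      = α • (x - x') - ρ • (x' - xstar) + (v - (ρ • xstar + f' xstar)) := by
    rw [hstep]; module
  have hpolar : 2 * ⟪x - x', x' - xstar⟫ = ‖x - xstar‖ ^ 2 - ‖x' - xstar‖ ^ 2 - ‖x - x'‖ ^ 2 := by
    rw [show x - x' = (x - xstar) - (x' - xstar) by abel,
      norm_sub_sq_real (x - xstar) (x' - xstar), inner_sub_left, real_inner_self_eq_norm_sq]
    ring
  have hinner : ⟪f' x - f' xstar, x' - xstar⟫ = α * ⟪x - x', x' - xstar⟫
      - ρ * ‖x' - xstar‖ ^ 2 + ⟪v - (ρ • xstar + f' xstar), x' - xstar⟫ := by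
    rw [hgrad, inner_add_left, inner_sub_left, real_inner_smul_left, real_inner_smul_left,
      real_inner_self_eq_norm_sq]
  linear_combination hf.le_inner_grad_sub_grad hμ hθ0 hθ1 x x' xstar + hinner + α / 2 * hpolar

lemma step_estimate_add_residual (hf : IsSmoothStronglyConvex f f' L μ) (hμ : 0 ≤ μ)
    (hθ0 : 0 ≤ θ) (hθ1 : θ ≤ 1) (hγ0 : 0 ≤ γ) (hγρ : γ * ρ ^ 2 ≤ θ * μ * φ / 2)
    (hγL : 2 * γ ≤ (1 - θ) / (2 * L)) (hγα : 2 * γ * α ^ 2 ≤ (α - L) / 2) {x x' v xstar : E}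
    (hstep : f' x = α • (x - x') - ρ • x' + v) :
    (ρ + (α - θ * μ * φ) / 2) * ‖x' - xstar‖ ^ 2 + γ / 2 * ‖v - (ρ • xstar + f' xstar)‖ ^ 2
      ≤ (α - θ * μ) / 2 * ‖x - xstar‖ ^ 2 + ⟪v - (ρ • xstar + f' xstar), x' - xstar⟫ := by
  linear_combination hf.step_estimate (xstar := xstar) hμ hθ0 hθ1 hstep
    + γ / 2 * norm_sq_le_of_step (gstar := f' xstar) (xstar := xstar) hstep
    + mul_le_mul_of_nonneg_right hγρ (sq_nonneg ‖x' - xstar‖)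
    + mul_le_mul_of_nonneg_right hγL (sq_nonneg ‖f' x - f' xstar‖)
    + mul_le_mul_of_nonneg_right hγα (sq_nonneg ‖x - x'‖)

lemma client_estimate (hf : IsSmoothStronglyConvex f f' L μ) (hμ : 0 ≤ μ)
    (hθ0 : 0 ≤ θ) (hθ1 : θ ≤ 1) (hφ1 : φ ≤ 1) (hρ : 0 < ρ) (hγ0 : 0 ≤ γ)
    (hγρ : γ * ρ ^ 2 ≤ θ * μ * φ / 2) (hγL : 2 * γ ≤ (1 - θ) / (2 * L))
    (hγα : 2 * γ * α ^ 2 ≤ (α - L) / 2) {K : ℕ} (hK : 1 ≤ K) {x : ℕ → E} {v xbar xstar : E}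
    (hstep : ∀ k < K, f' (x k) = α • (x k - x (k + 1)) - ρ • x (k + 1) + v)
    (hxbar : xbar = (1 / (K : ℝ)) • ∑ k ∈ range K, x (k + 1)) :
    (α - θ * μ * φ) / (2 * K) * ‖x K - xstar‖ ^ 2
        + 1 / (4 * ρ) * ‖(2 * ρ) • (xbar - xstar) - (v - (ρ • xstar + f' xstar))‖ ^ 2
      ≤ (α - θ * μ) / (2 * K) * ‖x 0 - xstar‖ ^ 2
        + (1 / (4 * ρ) - γ / 2) * ‖v - (ρ • xstar + f' xstar)‖ ^ 2 := by
  set δ := v - (ρ • xstar + f' xstar)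
  set SB := ∑ k ∈ range K, ‖x (k + 1) - xstar‖ ^ 2
  have hKpos : (0 : ℝ) < K := by exact_mod_cast hK
  have hsum : ∑ k ∈ range K, (x (k + 1) - xstar) = (K : ℝ) • (xbar - xstar) := by
    rw [hxbar, smul_sub, smul_smul, mul_one_div_cancel hKpos.ne', one_smul, sum_sub_distrib,
      sum_const, card_range, Nat.cast_smul_eq_nsmul]
  have htele := sum_range_add_le_of_forall_add_le
    (u := fun k => (ρ + θ * μ * (1 - φ) / 2) * ‖x (k + 1) - xstar‖ ^ 2 + γ / 2 * ‖δ‖ ^ 2)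
    (a := fun k => (α - θ * μ) / 2 * ‖x k - xstar‖ ^ 2)
    (w := fun k => ⟪δ, x (k + 1) - xstar⟫) fun k hk => by
      linear_combination hf.step_estimate_add_residual hμ hθ0 hθ1 hγ0 hγρ hγL hγα (hstep k hk)
  simp only [sum_add_distrib, ← mul_sum, sum_const, card_range, nsmul_eq_mul, ← inner_sum,
    hsum, real_inner_smul_right] at htele
  have hlast : ‖x K - xstar‖ ^ 2 ≤ SB := by
    obtain ⟨K', rfl⟩ := Nat.exists_eq_add_of_le' hK
    exact single_le_sum (f := fun k => ‖x (k + 1) - xstar‖ ^ 2) (fun _ _ => by positivity)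
      (self_mem_range_succ K')
  have hjensen : K * ‖xbar - xstar‖ ^ 2 ≤ SB := by
    simpa only [card_range] using card_mul_norm_sq_le_sum_norm_sq_of_sum_eq (s := range K)
      (by rwa [card_range])
  have hexpand : ‖(2 * ρ) • (xbar - xstar) - δ‖ ^ 2
      = 4 * ρ ^ 2 * ‖xbar - xstar‖ ^ 2 - 4 * ρ * ⟪δ, xbar - xstar⟫ + ‖δ‖ ^ 2 := by
    rw [norm_sub_sq_real, norm_smul, real_inner_smul_left, real_inner_comm, Real.norm_eq_abs,
      mul_pow, sq_abs]
    ring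
  have hscaled : (α - θ * μ * φ) / 2 * ‖x K - xstar‖ ^ 2
      + K * (ρ * ‖xbar - xstar‖ ^ 2 - ⟪δ, xbar - xstar⟫ + γ / 2 * ‖δ‖ ^ 2)
      ≤ (α - θ * μ) / 2 * ‖x 0 - xstar‖ ^ 2 := by
    have h1 := mul_le_mul_of_nonneg_left hjensen hρ.le
    have h2 := mul_le_mul_of_nonneg_left hlast
      (by have := sub_nonneg.2 hφ1; positivity : 0 ≤ θ * μ * (1 - φ) / 2)
    linear_combination htele + h1 + h2
  rw [hexpand]
  calc _ = ((α - θ * μ * φ) / 2 * ‖x K - xstar‖ ^ 2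
          + K * (ρ * ‖xbar - xstar‖ ^ 2 - ⟪δ, xbar - xstar⟫ + γ / 2 * ‖δ‖ ^ 2)) / K
          + (1 / (4 * ρ) - γ / 2) * ‖δ‖ ^ 2 := by
        field_simp
        ring
    _ ≤ (α - θ * μ) / 2 * ‖x 0 - xstar‖ ^ 2 / K + (1 / (4 * ρ) - γ / 2) * ‖δ‖ ^ 2 := by
        gcongr
    _ = _ := by ring

lemma gpdmm_client_estimate (hf : IsSmoothStronglyConvex f f' L μ) (hμ : 0 ≤ μ)
    (hθ0 : 0 ≤ θ) (hθ1 : θ ≤ 1) (hφ1 : φ ≤ 1) (hα : 0 ≤ α) (hρ : 0 < ρ) (hγ0 : 0 ≤ γ)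
    (hγρ : γ * ρ ^ 2 ≤ θ * μ * φ / 2) (hγL : 2 * γ ≤ (1 - θ) / (2 * L))
    (hγα : 2 * γ * α ^ 2 ≤ (α - L) / 2) {K : ℕ} (hK : 1 ≤ K) {x : ℕ → E}
    {xs lamsi lamis xbar xstar : E}
    (hinner : ∀ k < K, x (k + 1) = x k - (1 / (α + ρ)) • (f' (x k) + ρ • (x k - xs) + lamsi))
    (hxbar : xbar = (1 / (K : ℝ)) • ∑ k ∈ range K, x (k + 1))
    (hlamis : lamis = ρ • (xs - xbar) - lamsi) :
    (α - θ * μ * φ) / (2 * K) * ‖x K - xstar‖ ^ 2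
        + 1 / (4 * ρ) * ‖ρ • (xbar - xstar) - (lamis - f' xstar)‖ ^ 2
      ≤ (α - θ * μ) / (2 * K) * ‖x 0 - xstar‖ ^ 2
        + (1 / (4 * ρ) - γ / 2) * ‖ρ • (xbar - xstar) + (lamis - f' xstar)‖ ^ 2 := by
  have h := hf.client_estimate (xstar := xstar) hμ hθ0 hθ1 hφ1 hρ hγ0 hγρ hγL hγα hK
    (fun k hk => eq_of_gradient_update (by positivity) (hinner k hk)) hxbar
  rwa [show ρ • (xbar - xstar) + (lamis - f' xstar)
        = ρ • xs - lamsi - (ρ • xstar + f' xstar) by rw [hlamis]; module,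
    show ρ • (xbar - xstar) - (lamis - f' xstar)
        = (2 * ρ) • (xbar - xstar) - (ρ • xs - lamsi - (ρ • xstar + f' xstar)) by
      rw [hlamis]; module]

end IsSmoothStronglyConvex

end InnerProductSpace

lemma gpdmm_gamma_bounds {L μ η ρ θ φ γ₁ γ₂ : ℝ} (hL : 0 < L) (hηL : L < 1 / η) (hρ : ρ ≠ 0)
    (hθ0 : 0 < θ) (hθ1 : θ < 1) (hμ : 0 < μ) (hφ : 0 < φ)
    (hγ₁ : γ₁ = min ((1 - θ) / (2 * L * η ^ 2)) ((1 / η - L) / 2))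
    (hγ₂ : γ₂ = min (θ * μ * φ / (2 * ρ ^ 2)) (γ₁ * η ^ 2 / 2)) :
    0 < γ₂ ∧ γ₂ * ρ ^ 2 ≤ θ * μ * φ / 2 ∧ 2 * γ₂ ≤ (1 - θ) / (2 * L)
      ∧ 2 * γ₂ * (1 / η) ^ 2 ≤ (1 / η - L) / 2 := by
  have hη : η ≠ 0 := by
    rintro rfl
    rw [div_zero] at hηL
    linarith
  have hγ₁pos : 0 < γ₁ :=
    hγ₁ ▸ lt_min (div_pos (by linarith) (by positivity)) (by linarith)
  have hγ₂γ₁ : 2 * γ₂ ≤ γ₁ * η ^ 2 := by linarith [hγ₂ ▸ min_le_right _ (γ₁ * η ^ 2 / 2)]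
  refine ⟨hγ₂ ▸ lt_min (by positivity) (by positivity), ?_, ?_, ?_⟩
  · calc γ₂ * ρ ^ 2 ≤ θ * μ * φ / (2 * ρ ^ 2) * ρ ^ 2 := by
          gcongr
          exact hγ₂ ▸ min_le_left _ _
      _ = θ * μ * φ / 2 := by field_simp
  · calc 2 * γ₂ ≤ γ₁ * η ^ 2 := hγ₂γ₁
      _ ≤ (1 - θ) / (2 * L * η ^ 2) * η ^ 2 := by
          gcongr
          exact hγ₁ ▸ min_le_left _ _
      _ = (1 - θ) / (2 * L) := by field_simp
  · calc 2 * γ₂ * (1 / η) ^ 2 ≤ γ₁ * η ^ 2 * (1 / η) ^ 2 := by gcongr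
      _ = γ₁ := by field_simp
      _ ≤ (1 / η - L) / 2 := hγ₁ ▸ min_le_right _ _

lemma gpdmm_rate_bounds {L μ η ρ θ φ γ₂ β : ℝ} (hμ : 0 < μ) (hμL : μ ≤ L) (hηL : L < 1 / η)
    (hρ : 0 < ρ) (hθ0 : 0 < θ) (hθ1 : θ < 1) (hφ1 : φ < 1)
    (hcond : θ * μ * φ / (4 * ρ ^ 2) < 1 / (4 * ρ)) (hγ₂0 : 0 < γ₂)
    (hγ₂ : γ₂ ≤ θ * μ * φ / (2 * ρ ^ 2))
    (hβ : β = max ((1 / (4 * ρ) - γ₂ / 2) / (1 / (4 * ρ)))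
                  ((1 / η - θ * μ) / (1 / η - θ * μ * φ))) :
    (0 < β ∧ β < 1) ∧ 1 / (4 * ρ) - γ₂ / 2 ≤ β * (1 / (4 * ρ))
      ∧ 1 / η - θ * μ ≤ β * (1 / η - θ * μ * φ) := by
  have hc : 0 < 1 / (4 * ρ) := by positivity
  have hγ₂c : γ₂ / 2 < 1 / (4 * ρ) :=
    calc γ₂ / 2 ≤ θ * μ * φ / (2 * ρ ^ 2) / 2 := by linarith
      _ = θ * μ * φ / (4 * ρ ^ 2) := by ring
      _ < 1 / (4 * ρ) := hcond
  have hθμ : θ * μ < 1 / η := by nlinarith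
  have hθμφ : θ * μ * φ < θ * μ := mul_lt_of_lt_one_right (by positivity) hφ1
  have hd : 0 < 1 / η - θ * μ * φ := by linarith
  have hβ₁ : (1 / (4 * ρ) - γ₂ / 2) / (1 / (4 * ρ)) ≤ β := hβ ▸ le_max_left _ _
  have hβ₂ : (1 / η - θ * μ) / (1 / η - θ * μ * φ) ≤ β := hβ ▸ le_max_right _ _
  refine ⟨⟨?_, ?_⟩, ?_, ?_⟩
  · exact (div_pos (by linarith) hc).trans_le hβ₁
  · rw [hβ]
    exact max_lt ((div_lt_one hc).2 (by linarith)) ((div_lt_one hd).2 (by linarith))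
  · exact (div_le_iff₀ hc).1 hβ₁
  · exact (div_le_iff₀ hd).1 hβ₂

theorem gpdmm_linear_convergence_general {d m K : ℕ} (hK : 1 ≤ K)
    (f : Fin m → EuclideanSpace ℝ (Fin d) → ℝ)
    (f' : Fin m → EuclideanSpace ℝ (Fin d) → EuclideanSpace ℝ (Fin d))
    (L μ : ℝ) (hL : 0 < L) (hμ : 0 < μ) (hμL : μ ≤ L)
    (hdescent : ∀ i x y, f i y ≤ f i x + ⟪f' i x, y - x⟫ + L / 2 * ‖x - y‖ ^ 2)
    (hcoco : ∀ i x y, f i y ≥ f i x + ⟪f' i x, y - x⟫ + 1 / (2 * L) * ‖f' i x - f' i y‖ ^ 2)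
    (hstrong : ∀ i x y, f i y ≥ f i x + ⟪f' i x, y - x⟫ + μ / 2 * ‖x - y‖ ^ 2)
    (η ρ : ℝ) (hηL : L < 1 / η) (hρ : 0 < ρ)
    -- GPDMM iterates : xi i r k = xᵢ^{r,k}, xbar i r = x̄ᵢ^{r,K},
    -- lamis i r = λ_{i|s}^r, lamsi i r = λ_{s|i}^r, xs r = x_s^r
    (xi : Fin m → ℕ → ℕ → EuclideanSpace ℝ (Fin d))
    (xbar : Fin m → ℕ → EuclideanSpace ℝ (Fin d))
    (lamis lamsi : Fin m → ℕ → EuclideanSpace ℝ (Fin d))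
    (xs : ℕ → EuclideanSpace ℝ (Fin d))
    (hinit : ∀ i, ∀ r ≥ 1, xi i r 0 = xi i (r - 1) K)
    (hinner : ∀ i, ∀ r ≥ 1, ∀ k < K, xi i r (k + 1) =
      xi i r k - (1 / (1 / η + ρ)) • (f' i (xi i r k) + ρ • (xi i r k - xs r) + lamsi i r))
    (hxbar : ∀ i, ∀ r ≥ 1, xbar i r = (1 / (K : ℝ)) • ∑ k ∈ Finset.range K, xi i r (k + 1))
    (hlamis : ∀ i, ∀ r ≥ 1, lamis i (r + 1) = ρ • (xs r - xbar i r) - lamsi i r)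
    (hxs : ∀ r ≥ 1, xs (r + 1) = (1 / (m : ℝ)) • ∑ i, (xbar i r - (1 / ρ) • lamis i (r + 1)))
    (hlamsi : ∀ i, ∀ r ≥ 1, lamsi i (r + 1) = ρ • (xbar i r - xs (r + 1)) - lamis i (r + 1))
    -- KKT point
    (xstar : EuclideanSpace ℝ (Fin d)) (lamstar : Fin m → EuclideanSpace ℝ (Fin d))
    (hKKTgrad : ∀ i, f' i xstar = lamstar i)
    (hKKTsum : ∑ i, lamstar i = 0)
    -- parameters
    (θ φ : ℝ) (hθ : θ ∈ Set.Ioo (0 : ℝ) 1) (hφ : φ ∈ Set.Ioo (0 : ℝ) 1)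
    (hcond : θ * μ * φ / (4 * ρ ^ 2) < 1 / (4 * ρ))
    (γ₁ γ₂ β : ℝ)
    (hγ₁ : γ₁ = min ((1 - θ) / (2 * L * η ^ 2)) ((1 / η - L) / 2))
    (hγ₂ : γ₂ = min (θ * μ * φ / (2 * ρ ^ 2)) (γ₁ * η ^ 2 / 2))
    (hβ : β = max ((1 / (4 * ρ) - γ₂ / 2) / (1 / (4 * ρ)))
                  ((1 / η - θ * μ) / (1 / η - θ * μ * φ))) :
    (0 < β ∧ β < 1) ∧
      ∀ r ≥ 1,
        (∑ i, ((1 / η - θ * μ) / (2 * (K : ℝ)) * ‖xi i r K - xstar‖ ^ 2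
            + (1 / (4 * ρ) - γ₂ / 2) *
                ‖ρ • (xbar i (r + 1) - xstar) + (lamis i (r + 2) - lamstar i)‖ ^ 2))
          ≤ β *
            ∑ i, ((1 / η - θ * μ) / (2 * (K : ℝ)) * ‖xi i (r - 1) K - xstar‖ ^ 2
              + (1 / (4 * ρ) - γ₂ / 2) *
                  ‖ρ • (xbar i r - xstar) + (lamis i (r + 1) - lamstar i)‖ ^ 2) := by
  obtain ⟨hθ0, hθ1⟩ := hθ
  obtain ⟨hφ0, hφ1⟩ := hφ
  have hf (i : Fin m) : IsSmoothStronglyConvex (f i) (f' i) L μ :=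
    ⟨hdescent i, hcoco i, hstrong i⟩
  obtain ⟨hγ₂0, hγρ, hγL, hγα⟩ := gpdmm_gamma_bounds hL hηL hρ.ne' hθ0 hθ1 hμ hφ0 hγ₁ hγ₂
  obtain ⟨hrate, hB, hA⟩ := gpdmm_rate_bounds hμ hμL hηL hρ hθ0 hθ1 hφ1 hcond hγ₂0
    (hγ₂ ▸ min_le_left _ _) hβ
  refine ⟨hrate, fun r hr => sum_le_mul_sum_of_reflection
    (A' := (1 / η - θ * μ * φ) / (2 * K)) (C := 1 / (4 * ρ))
    (w := fun i => ρ • (xbar i r - xstar) - (lamis i (r + 1) - lamstar i)) hrate.1.le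
    (by rw [← mul_div_assoc]; gcongr) hB (fun _ => sq_nonneg _) (fun i => ?_) (fun i => ?_)⟩
  · exact gpdmm_dual_reflection hρ.ne' (by rw [Fintype.card_fin]; exact hxs r hr)
      (fun j => hlamsi j r hr) (fun j => hlamis j (r + 1) (by omega)) hKKTsum i
  · simpa only [hKKTgrad, hinit i r hr] using (hf i).gpdmm_client_estimate (xstar := xstar)
      hμ.le hθ0.le hθ1.le hφ1.le (hL.trans hηL).le hρ hγ₂0.le hγρ hγL hγα hK (hinner i r hr)
      (hxbar i r hr) (hlamis i r hr)

/-- Theorem 1 of the paper: linear convergence of GPDMM for strongly convex clients. -/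
theorem gpdmm_linear_convergence {d m K : ℕ} (hm : 0 < m) (hK : 1 ≤ K)
    (f : Fin m → EuclideanSpace ℝ (Fin d) → ℝ)
    (f' : Fin m → EuclideanSpace ℝ (Fin d) → EuclideanSpace ℝ (Fin d))
    (L μ : ℝ) (hL : 0 < L) (hμ : 0 < μ) (hμL : μ ≤ L)
    (hdiff : ∀ i x, HasGradientAt (f i) (f' i x) x)
    (hdescent : ∀ i x y, f i y ≤ f i x + ⟪f' i x, y - x⟫ + L / 2 * ‖x - y‖ ^ 2)
    (hcoco : ∀ i x y, f i y ≥ f i x + ⟪f' i x, y - x⟫ + 1 / (2 * L) * ‖f' i x - f' i y‖ ^ 2)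
    (hstrong : ∀ i x y, f i y ≥ f i x + ⟪f' i x, y - x⟫ + μ / 2 * ‖x - y‖ ^ 2)
    (η ρ : ℝ) (hη : 0 < η) (hηL : L < 1 / η) (hρ : 0 < ρ)
    -- GPDMM iterates : xi i r k = xᵢ^{r,k}, xbar i r = x̄ᵢ^{r,K},
    -- lamis i r = λ_{i|s}^r, lamsi i r = λ_{s|i}^r, xs r = x_s^r
    (xi : Fin m → ℕ → ℕ → EuclideanSpace ℝ (Fin d))
    (xbar : Fin m → ℕ → EuclideanSpace ℝ (Fin d))
    (lamis lamsi : Fin m → ℕ → EuclideanSpace ℝ (Fin d))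
    (xs : ℕ → EuclideanSpace ℝ (Fin d))
    (hinit : ∀ i, ∀ r ≥ 1, xi i r 0 = xi i (r - 1) K)
    (hinner : ∀ i, ∀ r ≥ 1, ∀ k < K, xi i r (k + 1) =
      xi i r k - (1 / (1 / η + ρ)) • (f' i (xi i r k) + ρ • (xi i r k - xs r) + lamsi i r))
    (hxbar : ∀ i, ∀ r ≥ 1, xbar i r = (1 / (K : ℝ)) • ∑ k ∈ Finset.range K, xi i r (k + 1))
    (hlamis : ∀ i, ∀ r ≥ 1, lamis i (r + 1) = ρ • (xs r - xbar i r) - lamsi i r)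
    (hxs : ∀ r ≥ 1, xs (r + 1) = (1 / (m : ℝ)) • ∑ i, (xbar i r - (1 / ρ) • lamis i (r + 1)))
    (hlamsi : ∀ i, ∀ r ≥ 1, lamsi i (r + 1) = ρ • (xbar i r - xs (r + 1)) - lamis i (r + 1))
    -- KKT point
    (xstar : EuclideanSpace ℝ (Fin d)) (lamstar : Fin m → EuclideanSpace ℝ (Fin d))
    (hKKTgrad : ∀ i, f' i xstar = lamstar i)
    (hKKTsum : ∑ i, lamstar i = 0)
    -- parameters
    (θ φ : ℝ) (hθ : θ ∈ Set.Ioo (0 : ℝ) 1) (hφ : φ ∈ Set.Ioo (0 : ℝ) 1)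
    (hcond : θ * μ * φ / (4 * ρ ^ 2) < 1 / (4 * ρ))
    (γ₁ γ₂ β : ℝ)
    (hγ₁ : γ₁ = min ((1 - θ) / (2 * L * η ^ 2)) ((1 / η - L) / 2))
    (hγ₂ : γ₂ = min (θ * μ * φ / (2 * ρ ^ 2)) (γ₁ * η ^ 2 / 2))
    (hβ : β = max ((1 / (4 * ρ) - γ₂ / 2) / (1 / (4 * ρ)))
                  ((1 / η - θ * μ) / (1 / η - θ * μ * φ))) :
    (0 < β ∧ β < 1) ∧
      ∀ r ≥ 1,
        (∑ i, ((1 / η - θ * μ) / (2 * (K : ℝ)) * ‖xi i r K - xstar‖ ^ 2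
            + (1 / (4 * ρ) - γ₂ / 2) *
                ‖ρ • (xbar i (r + 1) - xstar) + (lamis i (r + 2) - lamstar i)‖ ^ 2))
          ≤ β *
            ∑ i, ((1 / η - θ * μ) / (2 * (K : ℝ)) * ‖xi i (r - 1) K - xstar‖ ^ 2
              + (1 / (4 * ρ) - γ₂ / 2) *
                  ‖ρ • (xbar i r - xstar) + (lamis i (r + 1) - lamstar i)‖ ^ 2) :=
  gpdmm_linear_convergence_general hK f f' L μ hL hμ hμL hdescent hcoco hstrong η ρ hηL hρ xi xbar
    lamis lamsi xs hinit hinner hxbar hlamis hxs hlamsi xstar lamstar hKKTgrad hKKTsum θ φ hθ hφ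
    hcond γ₁ γ₂ β hγ₁ hγ₂ hβ
end

section
/- Suppose each f_i is convex (μ = 0) and the GPDMM iterates are generated by the GPDMM update equations for all outer iterations r ≥ 1, with 1/η > L, and let (x*, {λ*_{i|s}}) be a KKT point. For R ≥ 1 define the averaged dual estimates λ̄_{i|s}^{R} = (1/R)∑_{r=1}^R λ_{i|s}^{r+1}, let γ₁ = min( 1/(2Lη²), (1/η − L)/2 ), and let C = ∑_{i=1}^m [ (1/(2ηK))‖x_i^{0,K} − x*‖² + (1/(4ρ))‖ρ(x̄_i^{1,K} − x*) + (λ_{i|s}^{2} − λ*_{i|s})‖² ]. Then for every R ≥ 1: ∑_{i=1}^m (γ₁η²/2)‖λ̄_{i|s}^{R} − λ*_{i|s}‖² ≤ C/R; in particular this quantity is O(1/R) as R → ∞. -/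
open scoped RealInnerProductSpace

/-!
Write `w(y) = ρ (x_s − y) − λ_{s|i} − λ*_i` for the dual estimate a client would send if its
iterate were `y`. Convexity, the descent lemma and cocoercivity, evaluated at an inner step
`x ↦ x'` and at `x*`, give `γ₁η²/2 ‖w(x')‖² − ⟪w(x'), x' − x*⟫ ≤ (‖x − x*‖² − ‖x' − x*‖²)/(2η)`.
The left side is a convex quadratic in `x'` and `w` is affine, so averaging the `K` inner steps
yields the same bound at `x̄_i` with `w(x̄_i) = λ_{i|s}^{r+1} − λ*_i`. Polarizing
`⟪λ_{i|s} − λ*_i, x̄_i − x*⟫` into `‖ρ(x̄_i − x*) ± (λ_{i|s} − λ*_i)‖²/(4ρ)`, the server step turns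
the `−` potential of round `r` into the `+` potential of round `r + 1`, because the server duals
`λ_{s|i}` sum to zero. The per-round bounds then telescope to `C`, and Jensen's inequality over
the rounds gives the `C / R` rate.
-/

open Finset

section
variable {E : Type*} [NormedAddCommGroup E] [InnerProductSpace ℝ E]

theorem norm_average_sub_sq_le {ι : Type*} {s : Finset ι} (hs : s.Nonempty) (y : ι → E)
    (v : E) :
    ‖(1 / (#s : ℝ)) • ∑ k ∈ s, y k - v‖ ^ 2 ≤ 1 / #s * ∑ k ∈ s, ‖y k - v‖ ^ 2 := by
  have hconv : ConvexOn ℝ Set.univ (fun u : E => ‖u‖ ^ 2) :=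
    (convexOn_norm convex_univ).pow (fun _ _ => norm_nonneg _) 2
  have hcard : (#s : ℝ) ≠ 0 := by exact_mod_cast hs.card_pos.ne'
  have hweights : ∑ _k ∈ s, (1 / (#s : ℝ)) = 1 := by
    rw [sum_const, nsmul_eq_mul]; field_simp
  have hmean : (1 / (#s : ℝ)) • ∑ k ∈ s, y k - v = ∑ k ∈ s, (1 / (#s : ℝ)) • (y k - v) := by
    rw [← smul_sum, sum_sub_distrib, sum_const, smul_sub, ← Nat.cast_smul_eq_nsmul ℝ, smul_smul,
      one_div_mul_cancel hcard, one_smul]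
  rw [hmean, mul_sum]
  exact hconv.map_sum_le (fun _ _ => by positivity) hweights (fun _ _ => Set.mem_univ _)

theorem sum_inner_sub_average_nonneg {ι : Type*} (s : Finset ι) (y : ι → E) (v : E) :
    0 ≤ ∑ k ∈ s, ⟪y k - (1 / (#s : ℝ)) • ∑ j ∈ s, y j, y k - v⟫ := by
  set ybar := (1 / (#s : ℝ)) • ∑ j ∈ s, y j
  rcases s.eq_empty_or_nonempty with rfl | hs
  · simp
  have hcentered : ∑ k ∈ s, (y k - ybar) = 0 := by
    have hcard : (#s : ℝ) ≠ 0 := by exact_mod_cast hs.card_pos.ne'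
    rw [sum_sub_distrib, sum_const, ← Nat.cast_smul_eq_nsmul ℝ, smul_smul,
      mul_one_div_cancel hcard, one_smul, sub_self]
  have hsplit : ∀ k, ⟪y k - ybar, y k - v⟫ = ‖y k - ybar‖ ^ 2 + ⟪y k - ybar, ybar - v⟫ := by
    intro k
    rw [← real_inner_self_eq_norm_sq, ← inner_add_right, sub_add_sub_cancel]
  rw [sum_congr rfl fun k _ => hsplit k, sum_add_distrib, ← sum_inner, hcentered,
    inner_zero_left, add_zero]
  positivity

theorem card_mul_quadratic_le_sum {ι : Type*} {s : Finset ι} (hs : s.Nonempty) (y : ι → E)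
    {ybar : E} (hybar : ybar = (1 / (#s : ℝ)) • ∑ k ∈ s, y k) (a v : E) {c ρ : ℝ}
    (hc : 0 ≤ c) (hρ : 0 ≤ ρ) :
    #s * (c * ‖a - ρ • ybar‖ ^ 2 - ⟪a - ρ • ybar, ybar - v⟫)
      ≤ ∑ k ∈ s, (c * ‖a - ρ • y k‖ ^ 2 - ⟪a - ρ • y k, y k - v⟫) := by
  have hcard : (0 : ℝ) < #s := by exact_mod_cast hs.card_pos
  have hsum : ∑ k ∈ s, y k = (#s : ℝ) • ybar := by
    rw [hybar, smul_smul, mul_one_div_cancel hcard.ne', one_smul]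
  have hquad : #s * ‖a - ρ • ybar‖ ^ 2 ≤ ∑ k ∈ s, ‖a - ρ • y k‖ ^ 2 := by
    have h := norm_average_sub_sq_le hs (fun k => ρ • y k) a
    rw [← smul_sum, smul_comm, ← hybar, norm_sub_rev] at h
    simp only [norm_sub_rev _ a] at h
    rwa [one_div_mul_eq_div, le_div_iff₀' hcard] at h
  have hinner : ∑ k ∈ s, ⟪a - ρ • y k, y k - v⟫
      = #s * ⟪a - ρ • ybar, ybar - v⟫ - ρ * ∑ k ∈ s, ⟪y k - ybar, y k - v⟫ := by
    have hk : ∀ k, ⟪a - ρ • y k, y k - v⟫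
        = ⟪a - ρ • ybar, y k - v⟫ - ρ * ⟪y k - ybar, y k - v⟫ := by
      intro k
      rw [← real_inner_smul_left, ← inner_sub_left]
      congr 1
      module
    rw [sum_congr rfl fun k _ => hk k, sum_sub_distrib, ← inner_sum, ← mul_sum, sum_sub_distrib,
      hsum, sum_const, ← Nat.cast_smul_eq_nsmul ℝ, ← smul_sub, real_inner_smul_right]
  have hvar := sum_inner_sub_average_nonneg s y v
  rw [← hybar] at hvar
  rw [sum_sub_distrib, ← mul_sum, hinner]
  nlinarith [mul_le_mul_of_nonneg_left hquad hc, mul_nonneg hρ hvar]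

theorem inner_gradient_sub_ge {f : E → ℝ} {f' : E → E} {L : ℝ}
    (hconvex : ∀ x y, f y ≥ f x + ⟪f' x, y - x⟫)
    (hdescent : ∀ x y, f y ≤ f x + ⟪f' x, y - x⟫ + L / 2 * ‖x - y‖ ^ 2)
    (hcoco : ∀ x y, f y ≥ f x + ⟪f' x, y - x⟫ + 1 / (2 * L) * ‖f' x - f' y‖ ^ 2) (x x' y : E) :
    1 / (2 * L) * ‖f' x - f' y‖ ^ 2 - L / 2 * ‖x - x'‖ ^ 2 ≤ ⟪f' x - f' y, x' - y⟫ := by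
  have h₁ := hdescent x x'
  have h₂ := hcoco x y
  have h₃ := hconvex y x'
  simp only [inner_sub_left, inner_sub_right] at h₁ h₂ h₃ ⊢
  linarith

theorem gpdmm_inner_step_le {f : E → ℝ} {f' : E → E} {L η ρ γ : ℝ}
    (hconvex : ∀ x y, f y ≥ f x + ⟪f' x, y - x⟫)
    (hdescent : ∀ x y, f y ≤ f x + ⟪f' x, y - x⟫ + L / 2 * ‖x - y‖ ^ 2)
    (hcoco : ∀ x y, f y ≥ f x + ⟪f' x, y - x⟫ + 1 / (2 * L) * ‖f' x - f' y‖ ^ 2)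
    (hη : 0 < η) (hρ : 0 ≤ ρ) (hγ : 0 ≤ γ) (hγL : γ * η ^ 2 ≤ 1 / (2 * L))
    (hγη : γ ≤ (1 / η - L) / 2) {x x' z lam xstar : E}
    (hx' : x' = x - (1 / (1 / η + ρ)) • (f' x + ρ • (x - z) + lam)) :
    γ * η ^ 2 / 2 * ‖ρ • (z - x') - lam - f' xstar‖ ^ 2
        - ⟪ρ • (z - x') - lam - f' xstar, x' - xstar⟫
      ≤ 1 / (2 * η) * (‖x - xstar‖ ^ 2 - ‖x' - xstar‖ ^ 2) := by
  set w := ρ • (z - x') - lam - f' xstar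
  have hτ : 1 / η + ρ ≠ 0 := by positivity
  have hgrad : f' x - f' xstar = w + (1 / η) • (x - x') := by
    have h : (1 / η + ρ) • (x - x') = f' x + ρ • (x - z) + lam := by
      rw [hx', sub_sub_cancel, smul_smul, mul_one_div_cancel hτ, one_smul]
    have h' : f' x = (1 / η + ρ) • (x - x') - ρ • (x - z) - lam := by rw [h]; abel
    rw [h']; module
  have hw : ‖w‖ ^ 2 ≤ 2 * ‖f' x - f' xstar‖ ^ 2 + 2 / η ^ 2 * ‖x - x'‖ ^ 2 := by
    have hw_eq : w = (f' x - f' xstar) - (1 / η) • (x - x') := by rw [hgrad]; abel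
    have hpar := parallelogram_law_with_norm ℝ (f' x - f' xstar) ((1 / η) • (x - x'))
    rw [← hw_eq, norm_smul, mul_pow, Real.norm_eq_abs, sq_abs] at hpar
    have : 2 / η ^ 2 = 2 * (1 / η) ^ 2 := by ring
    nlinarith [sq_nonneg ‖f' x - f' xstar + (1 / η) • (x - x')‖]
  have hcross : ⟪(1 / η) • (x - x'), x' - xstar⟫
      = 1 / (2 * η) * (‖x - xstar‖ ^ 2 - ‖x' - xstar‖ ^ 2 - ‖x - x'‖ ^ 2) := by
    have h := norm_add_sq_real (x - x') (x' - xstar)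
    rw [sub_add_sub_cancel] at h
    rw [real_inner_smul_left, h]; ring
  have hsmooth := inner_gradient_sub_ge hconvex hdescent hcoco x x' xstar
  have hinner : ⟪f' x - f' xstar, x' - xstar⟫ = ⟪w, x' - xstar⟫
      + 1 / (2 * η) * (‖x - xstar‖ ^ 2 - ‖x' - xstar‖ ^ 2 - ‖x - x'‖ ^ 2) := by
    rw [hgrad, inner_add_left, hcross]
  have h₁ := mul_le_mul_of_nonneg_left hw (by positivity : 0 ≤ γ * η ^ 2 / 2)
  have h₂ := mul_le_mul_of_nonneg_right hγL (sq_nonneg ‖f' x - f' xstar‖)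
  have h₃ := mul_le_mul_of_nonneg_right hγη (sq_nonneg ‖x - x'‖)
  have hexpand : γ * η ^ 2 / 2 * (2 * ‖f' x - f' xstar‖ ^ 2 + 2 / η ^ 2 * ‖x - x'‖ ^ 2)
      = γ * η ^ 2 * ‖f' x - f' xstar‖ ^ 2 + γ * ‖x - x'‖ ^ 2 := by
    field_simp
  have hsplit : (1 / η - L) / 2 * ‖x - x'‖ ^ 2
      = 1 / (2 * η) * ‖x - x'‖ ^ 2 - L / 2 * ‖x - x'‖ ^ 2 := by
    ring
  linarith

theorem gpdmm_client_round_le {f : E → ℝ} {f' : E → E} {L η ρ γ : ℝ}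
    (hconvex : ∀ x y, f y ≥ f x + ⟪f' x, y - x⟫)
    (hdescent : ∀ x y, f y ≤ f x + ⟪f' x, y - x⟫ + L / 2 * ‖x - y‖ ^ 2)
    (hcoco : ∀ x y, f y ≥ f x + ⟪f' x, y - x⟫ + 1 / (2 * L) * ‖f' x - f' y‖ ^ 2)
    (hη : 0 < η) (hρ : 0 ≤ ρ) (hγ : 0 ≤ γ) (hγL : γ * η ^ 2 ≤ 1 / (2 * L))
    (hγη : γ ≤ (1 / η - L) / 2) {K : ℕ} (hK : 0 < K) (x : ℕ → E) {z lam xstar xbar lamnew : E}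
    (hstep : ∀ k < K, x (k + 1) = x k - (1 / (1 / η + ρ)) • (f' (x k) + ρ • (x k - z) + lam))
    (hxbar : xbar = (1 / (K : ℝ)) • ∑ k ∈ range K, x (k + 1))
    (hlamnew : lamnew = ρ • (z - xbar) - lam) :
    γ * η ^ 2 / 2 * ‖lamnew - f' xstar‖ ^ 2 - ⟪lamnew - f' xstar, xbar - xstar⟫
      ≤ 1 / (2 * η * K) * (‖x 0 - xstar‖ ^ 2 - ‖x K - xstar‖ ^ 2) := by
  set a := ρ • z - lam - f' xstar
  have haffine : ∀ y, ρ • (z - y) - lam - f' xstar = a - ρ • y := fun y => by module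
  have hsteps : ∀ k ∈ range K,
      γ * η ^ 2 / 2 * ‖a - ρ • x (k + 1)‖ ^ 2 - ⟪a - ρ • x (k + 1), x (k + 1) - xstar⟫
        ≤ 1 / (2 * η) * (‖x k - xstar‖ ^ 2 - ‖x (k + 1) - xstar‖ ^ 2) := by
    intro k hk
    rw [← haffine]
    exact gpdmm_inner_step_le hconvex hdescent hcoco hη hρ hγ hγL hγη (hstep k (mem_range.1 hk))
  have htelescope := (sum_le_sum hsteps).trans_eq
    (by rw [← mul_sum, sum_range_sub' (fun k => ‖x k - xstar‖ ^ 2)])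
  have havg := card_mul_quadratic_le_sum (nonempty_range_iff.2 hK.ne') (fun k => x (k + 1))
    (ybar := xbar) (by rwa [card_range]) a xstar (by positivity : 0 ≤ γ * η ^ 2 / 2) hρ
  rw [card_range] at havg
  rw [hlamnew, haffine]
  calc _ = 1 / (K : ℝ) * (K * (γ * η ^ 2 / 2 * ‖a - ρ • xbar‖ ^ 2
          - ⟪a - ρ • xbar, xbar - xstar⟫)) := by field_simp
    _ ≤ 1 / (K : ℝ) * (1 / (2 * η) * (‖x 0 - xstar‖ ^ 2 - ‖x K - xstar‖ ^ 2)) :=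
        mul_le_mul_of_nonneg_left (havg.trans htelescope) (by positivity)
    _ = _ := by ring

theorem sum_norm_add_sq_eq_sum_norm_sub_sq {ι : Type*} (s : Finset ι) (u : E) {v : ι → E}
    (hv : ∑ i ∈ s, v i = 0) : ∑ i ∈ s, ‖u + v i‖ ^ 2 = ∑ i ∈ s, ‖u - v i‖ ^ 2 := by
  have hcross : ∑ i ∈ s, ⟪u, v i⟫ = 0 := by rw [← inner_sum, hv, inner_zero_right]
  simp only [norm_add_sq_real, norm_sub_sq_real, sum_add_distrib, sum_sub_distrib, ← mul_sum,
    hcross, mul_zero, add_zero, sub_zero]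

theorem gpdmm_sum_server_dual_eq_zero {ι : Type*} [Fintype ι] {ρ : ℝ} (hρ : ρ ≠ 0) {z : E}
    {xbar μ ν : ι → E} (hz : z = (1 / (Fintype.card ι : ℝ)) • ∑ i, (xbar i - (1 / ρ) • μ i))
    (hν : ∀ i, ν i = ρ • (xbar i - z) - μ i) : ∑ i, ν i = 0 := by
  rcases isEmpty_or_nonempty ι with _ | _
  · simp
  have hcard : (Fintype.card ι : ℝ) ≠ 0 := by exact_mod_cast Fintype.card_ne_zero
  have hsum : (Fintype.card ι : ℝ) • z = ∑ i, xbar i - (1 / ρ) • ∑ i, μ i := by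
    rw [hz, smul_smul, mul_one_div_cancel hcard, one_smul, sum_sub_distrib, smul_sum]
  simp only [hν, sum_sub_distrib, ← smul_sum, sum_const, card_univ, ← Nat.cast_smul_eq_nsmul ℝ,
    smul_sub, hsum]
  rw [smul_smul, mul_one_div_cancel hρ, one_smul]
  abel

theorem gpdmm_server_potential_eq {ι : Type*} [Fintype ι] {ρ : ℝ} (hρ : ρ ≠ 0)
    {xstar z : E} {lamstar xbar μ ν xbar' μ' : ι → E} (hlamstar : ∑ i, lamstar i = 0)
    (hz : z = (1 / (Fintype.card ι : ℝ)) • ∑ i, (xbar i - (1 / ρ) • μ i))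
    (hν : ∀ i, ν i = ρ • (xbar i - z) - μ i) (hμ' : ∀ i, μ' i = ρ • (z - xbar' i) - ν i) :
    ∑ i, ‖ρ • (xbar' i - xstar) + (μ' i - lamstar i)‖ ^ 2
      = ∑ i, ‖ρ • (xbar i - xstar) - (μ i - lamstar i)‖ ^ 2 := by
  have hsum : ∑ i, (ν i + lamstar i) = 0 := by
    rw [sum_add_distrib, gpdmm_sum_server_dual_eq_zero hρ hz hν, hlamstar, add_zero]
  have hnext : ∀ i, ρ • (xbar' i - xstar) + (μ' i - lamstar i)
      = ρ • (z - xstar) - (ν i + lamstar i) := fun i => by rw [hμ']; module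
  have hprev : ∀ i, ρ • (xbar i - xstar) - (μ i - lamstar i)
      = ρ • (z - xstar) + (ν i + lamstar i) := fun i => by
    rw [show μ i = ρ • (xbar i - z) - ν i by rw [hν]; abel]; module
  simp only [hnext, hprev]
  exact (sum_norm_add_sq_eq_sum_norm_sub_sq _ _ hsum).symm

theorem sum_Icc_le_of_le_sub {a V : ℕ → ℝ} {R : ℕ} (hR : 1 ≤ R)
    (h : ∀ r ∈ Icc 1 R, a r ≤ V r - V (r + 1)) (hV : 0 ≤ V (R + 1)) :
    ∑ r ∈ Icc 1 R, a r ≤ V 1 := by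
  have htelescope := sum_Icc_sub hR (fun r => -V r)
  simp only [sub_neg_eq_add, neg_add_eq_sub] at htelescope
  linarith [sum_le_sum h]

theorem real_inner_eq_norm_smul_add_sq_sub_norm_smul_sub_sq {ρ : ℝ} (hρ : ρ ≠ 0) (a b : E) :
    ⟪b, a⟫ = 1 / (4 * ρ) * (‖ρ • a + b‖ ^ 2 - ‖ρ • a - b‖ ^ 2) := by
  rw [norm_add_sq_real, norm_sub_sq_real, real_inner_smul_left, real_inner_comm]
  field_simp
  ring

theorem sum_norm_average_Icc_sub_sq_le {ι : Type*} [Fintype ι] {c : ℝ} (hc : 0 ≤ c) {R : ℕ}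
    (hR : 1 ≤ R) (y : ι → ℕ → E) (v : ι → E) :
    ∑ i, c * ‖(1 / (R : ℝ)) • ∑ r ∈ Icc 1 R, y i r - v i‖ ^ 2
      ≤ 1 / (R : ℝ) * ∑ r ∈ Icc 1 R, ∑ i, c * ‖y i r - v i‖ ^ 2 := by
  have hcard : #(Icc 1 R) = R := by rw [Nat.card_Icc, Nat.add_sub_cancel]
  rw [sum_comm, mul_sum]
  refine sum_le_sum fun i _ => ?_
  have hjensen := norm_average_sub_sq_le (nonempty_Icc.2 hR) (y i) (v i)
  rw [hcard] at hjensen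
  rw [← mul_sum, mul_left_comm]
  exact mul_le_mul_of_nonneg_left hjensen hc
end

theorem gpdmm_sublinear_dual_general {d m K : ℕ} (hK : 1 ≤ K)
    (f : Fin m → EuclideanSpace ℝ (Fin d) → ℝ)
    (f' : Fin m → EuclideanSpace ℝ (Fin d) → EuclideanSpace ℝ (Fin d))
    (L : ℝ) (hL : 0 < L)
    (hconvex : ∀ i x y, f i y ≥ f i x + ⟪f' i x, y - x⟫)
    (hdescent : ∀ i x y, f i y ≤ f i x + ⟪f' i x, y - x⟫ + L / 2 * ‖x - y‖ ^ 2)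
    (hcoco : ∀ i x y, f i y ≥ f i x + ⟪f' i x, y - x⟫ + 1 / (2 * L) * ‖f' i x - f' i y‖ ^ 2)
    (η ρ : ℝ) (hη : 0 < η) (hηL : L < 1 / η) (hρ : 0 < ρ)
    -- GPDMM iterates
    (xi : Fin m → ℕ → ℕ → EuclideanSpace ℝ (Fin d))
    (xbar : Fin m → ℕ → EuclideanSpace ℝ (Fin d))
    (lamis lamsi : Fin m → ℕ → EuclideanSpace ℝ (Fin d))
    (xs : ℕ → EuclideanSpace ℝ (Fin d))
    (hinit : ∀ i, ∀ r ≥ 1, xi i r 0 = xi i (r - 1) K)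
    (hinner : ∀ i, ∀ r ≥ 1, ∀ k < K, xi i r (k + 1) =
      xi i r k - (1 / (1 / η + ρ)) • (f' i (xi i r k) + ρ • (xi i r k - xs r) + lamsi i r))
    (hxbar : ∀ i, ∀ r ≥ 1, xbar i r = (1 / (K : ℝ)) • ∑ k ∈ Finset.range K, xi i r (k + 1))
    (hlamis : ∀ i, ∀ r ≥ 1, lamis i (r + 1) = ρ • (xs r - xbar i r) - lamsi i r)
    (hxs : ∀ r ≥ 1, xs (r + 1) = (1 / (m : ℝ)) • ∑ i, (xbar i r - (1 / ρ) • lamis i (r + 1)))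
    (hlamsi : ∀ i, ∀ r ≥ 1, lamsi i (r + 1) = ρ • (xbar i r - xs (r + 1)) - lamis i (r + 1))
    -- KKT point
    (xstar : EuclideanSpace ℝ (Fin d)) (lamstar : Fin m → EuclideanSpace ℝ (Fin d))
    (hKKTgrad : ∀ i, f' i xstar = lamstar i)
    (hKKTsum : ∑ i, lamstar i = 0)
    -- the constants γ₁ and C
    (γ₁ : ℝ) (hγ₁ : γ₁ = min (1 / (2 * L * η ^ 2)) ((1 / η - L) / 2))
    (C : ℝ)
    (hC : C = ∑ i, (1 / (2 * η * (K : ℝ)) * ‖xi i 0 K - xstar‖ ^ 2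
      + 1 / (4 * ρ) * ‖ρ • (xbar i 1 - xstar) + (lamis i 2 - lamstar i)‖ ^ 2)) :
    ∀ R : ℕ, 1 ≤ R →
      ∑ i, (γ₁ * η ^ 2 / 2) *
          ‖((1 / (R : ℝ)) • ∑ r ∈ Finset.Icc 1 R, lamis i (r + 1)) - lamstar i‖ ^ 2
        ≤ C / (R : ℝ) := by
  intro R hR
  have hγ : 0 ≤ γ₁ := hγ₁ ▸ le_min (by positivity) (by linarith)
  have hγη : γ₁ ≤ (1 / η - L) / 2 := hγ₁ ▸ min_le_right _ _
  have hγL : γ₁ * η ^ 2 ≤ 1 / (2 * L) := by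
    have h : γ₁ ≤ 1 / (2 * L) / η ^ 2 := by rw [div_div, hγ₁]; exact min_le_left _ _
    exact (le_div_iff₀ (by positivity)).1 h
  set V : ℕ → ℝ := fun r => ∑ i, (1 / (2 * η * (K : ℝ)) * ‖xi i r 0 - xstar‖ ^ 2
    + 1 / (4 * ρ) * ‖ρ • (xbar i r - xstar) + (lamis i (r + 1) - lamstar i)‖ ^ 2)
  have hdecrease : ∀ r ∈ Icc 1 R,
      ∑ i, γ₁ * η ^ 2 / 2 * ‖lamis i (r + 1) - lamstar i‖ ^ 2 ≤ V r - V (r + 1) := by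
    intro r hr
    have hr1 := (mem_Icc.1 hr).1
    have hclient := fun i => gpdmm_client_round_le (hconvex i) (hdescent i) (hcoco i) hη hρ.le hγ hγL
      hγη hK (xi i r) (xstar := xstar) (hinner i r hr1) (hxbar i r hr1) (hlamis i r hr1)
    have hexchange := gpdmm_server_potential_eq hρ.ne' (xstar := xstar) hKKTsum
      (by rw [Fintype.card_fin]; exact hxs r hr1) (fun i => hlamsi i r hr1)
      (fun i => hlamis i (r + 1) (by omega))
    simp only [hKKTgrad, real_inner_eq_norm_smul_add_sq_sub_norm_smul_sub_sq hρ.ne'] at hclient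
    have hnext : ∀ i, xi i (r + 1) 0 = xi i r K := fun i => by
      simpa using hinit i (r + 1) (by omega)
    refine (sum_le_sum fun i _ => sub_le_iff_le_add.1 (hclient i)).trans_eq ?_
    simp only [V, hnext, mul_sub, sum_add_distrib, sum_sub_distrib, ← mul_sum, hexchange]
    ring
  have htotal : ∑ r ∈ Icc 1 R, ∑ i, γ₁ * η ^ 2 / 2 * ‖lamis i (r + 1) - lamstar i‖ ^ 2 ≤ C := by
    refine (sum_Icc_le_of_le_sub hR hdecrease (by positivity)).trans_eq ?_
    simp only [V, hC, hinit _ 1 le_rfl]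
  calc _ ≤ 1 / (R : ℝ) * ∑ r ∈ Icc 1 R, ∑ i, γ₁ * η ^ 2 / 2 * ‖lamis i (r + 1) - lamstar i‖ ^ 2 :=
        sum_norm_average_Icc_sub_sq_le (by positivity) hR _ _
    _ ≤ 1 / (R : ℝ) * C := by gcongr
    _ = C / R := by ring

/-- Second claim of Theorem 2 of the paper: sublinear O(1/R) convergence of the GPDMM
averaged dual estimates for general convex clients (μ = 0). -/
theorem gpdmm_sublinear_dual {d m K : ℕ} (hm : 0 < m) (hK : 1 ≤ K)
    (f : Fin m → EuclideanSpace ℝ (Fin d) → ℝ)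
    (f' : Fin m → EuclideanSpace ℝ (Fin d) → EuclideanSpace ℝ (Fin d))
    (L : ℝ) (hL : 0 < L)
    (hdiff : ∀ i x, HasGradientAt (f i) (f' i x) x)
    (hconvex : ∀ i x y, f i y ≥ f i x + ⟪f' i x, y - x⟫)
    (hdescent : ∀ i x y, f i y ≤ f i x + ⟪f' i x, y - x⟫ + L / 2 * ‖x - y‖ ^ 2)
    (hcoco : ∀ i x y, f i y ≥ f i x + ⟪f' i x, y - x⟫ + 1 / (2 * L) * ‖f' i x - f' i y‖ ^ 2)
    (η ρ : ℝ) (hη : 0 < η) (hηL : L < 1 / η) (hρ : 0 < ρ)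
    -- GPDMM iterates
    (xi : Fin m → ℕ → ℕ → EuclideanSpace ℝ (Fin d))
    (xbar : Fin m → ℕ → EuclideanSpace ℝ (Fin d))
    (lamis lamsi : Fin m → ℕ → EuclideanSpace ℝ (Fin d))
    (xs : ℕ → EuclideanSpace ℝ (Fin d))
    (hinit : ∀ i, ∀ r ≥ 1, xi i r 0 = xi i (r - 1) K)
    (hinner : ∀ i, ∀ r ≥ 1, ∀ k < K, xi i r (k + 1) =
      xi i r k - (1 / (1 / η + ρ)) • (f' i (xi i r k) + ρ • (xi i r k - xs r) + lamsi i r))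
    (hxbar : ∀ i, ∀ r ≥ 1, xbar i r = (1 / (K : ℝ)) • ∑ k ∈ Finset.range K, xi i r (k + 1))
    (hlamis : ∀ i, ∀ r ≥ 1, lamis i (r + 1) = ρ • (xs r - xbar i r) - lamsi i r)
    (hxs : ∀ r ≥ 1, xs (r + 1) = (1 / (m : ℝ)) • ∑ i, (xbar i r - (1 / ρ) • lamis i (r + 1)))
    (hlamsi : ∀ i, ∀ r ≥ 1, lamsi i (r + 1) = ρ • (xbar i r - xs (r + 1)) - lamis i (r + 1))
    -- KKT point
    (xstar : EuclideanSpace ℝ (Fin d)) (lamstar : Fin m → EuclideanSpace ℝ (Fin d))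
    (hKKTgrad : ∀ i, f' i xstar = lamstar i)
    (hKKTsum : ∑ i, lamstar i = 0)
    -- the constants γ₁ and C
    (γ₁ : ℝ) (hγ₁ : γ₁ = min (1 / (2 * L * η ^ 2)) ((1 / η - L) / 2))
    (C : ℝ)
    (hC : C = ∑ i, (1 / (2 * η * (K : ℝ)) * ‖xi i 0 K - xstar‖ ^ 2
      + 1 / (4 * ρ) * ‖ρ • (xbar i 1 - xstar) + (lamis i 2 - lamstar i)‖ ^ 2)) :
    ∀ R : ℕ, 1 ≤ R →
      ∑ i, (γ₁ * η ^ 2 / 2) *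
          ‖((1 / (R : ℝ)) • ∑ r ∈ Finset.Icc 1 R, lamis i (r + 1)) - lamstar i‖ ^ 2
        ≤ C / (R : ℝ) :=
  gpdmm_sublinear_dual_general hK f f' L hL hconvex hdescent hcoco η ρ hη hηL hρ xi xbar lamis lamsi
    xs hinit hinner hxbar hlamis hxs hlamsi xstar lamstar hKKTgrad hKKTsum γ₁ hγ₁ C hC
end

section
/- Let ρ > 0 and suppose vectors x_s^r, x_s^{r+1}, and for each i = 1,…,m vectors x̄_i^{r,K}, x̄_i^{r+1,K}, λ_{s|i}^r, λ_{s|i}^{r+1}, λ_{i|s}^{r+1}, λ_{i|s}^{r+2} in ℝ^d satisfy: λ_{i|s}^{r+1} = ρ(x_s^r − x̄_i^{r,K}) − λ_{s|i}^r; x_s^{r+1} = (1/m)∑_{i=1}^m (x̄_i^{r,K} − λ_{i|s}^{r+1}/ρ); λ_{s|i}^{r+1} = ρ(x̄_i^{r,K} − x_s^{r+1}) − λ_{i|s}^{r+1}; and λ_{i|s}^{r+2} = ρ(x_s^{r+1} − x̄_i^{r+1,K}) − λ_{s|i}^{r+1}. Let x* ∈ ℝ^d and λ*_{i|s} ∈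 ℝ^d with ∑_{i=1}^m λ*_{i|s} = 0. Then: 2∑_{i=1}^m (x̄_i^{r,K} − x*)ᵀλ_{i|s}^{r+1} = 2∑_{i=1}^m (λ*_{i|s})ᵀ x̄_i^{r,K} + ∑_{i=1}^m (1/(2ρ))‖ρ(x̄_i^{r,K} − x*) + (λ_{i|s}^{r+1} − λ*_{i|s})‖² − ∑_{i=1}^m (1/(2ρ))‖ρ(x̄_i^{r+1,K} − x*) + (λ_{i|s}^{r+2} − λ*_{i|s})‖². -/
/-!
Substituting the two dual updates shows that the `i`-th vector in the second norm is the `i`-th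
vector in the first one shifted by `-2ρ (x̄ᵢ - xₛ)`, with `xₛ` the new server point, so the
difference of the squared norms is an inner product. Summed over `i`, its cross terms vanish
because the server update makes the new duals `λ_{s|i}` sum to zero, as the `λ*_{i|s}` do.
-/

open scoped RealInnerProductSpace

theorem Finset.sum_sub_eq_zero_of_eq_average {ι K E : Type*} [Field K] [CharZero K]
    [AddCommGroup E] [Module K E] {s : Finset ι} {v : ι → E} {x : E}
    (hx : x = (1 / (s.card : K)) • ∑ i ∈ s, v i) : ∑ i ∈ s, (v i - x) = 0 := by
  rcases s.eq_empty_or_nonempty with rfl | hs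
  · simp
  have hcard : (s.card : K) ≠ 0 := Nat.cast_ne_zero.mpr hs.card_pos.ne'
  rw [Finset.sum_sub_distrib, Finset.sum_const, ← Nat.cast_smul_eq_nsmul K, hx, smul_smul,
    mul_one_div_cancel hcard, one_smul, sub_self]

section InnerProduct

variable {E : Type*} [NormedAddCommGroup E] [InnerProductSpace ℝ E]

theorem norm_sq_sub_norm_sq_sub_two_mul_smul {ρ : ℝ} (hρ : ρ ≠ 0) (a c : E) :
    1 / (2 * ρ) * ‖a‖ ^ 2 - 1 / (2 * ρ) * ‖a - (2 * ρ) • c‖ ^ 2 = 2 * ⟪c, a - ρ • c⟫ := by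
  rw [norm_sub_sq_real, norm_smul, mul_pow, Real.norm_eq_abs, sq_abs, inner_smul_right,
    inner_sub_right, inner_smul_right, real_inner_self_eq_norm_sq, real_inner_comm]
  field_simp
  ring

theorem two_mul_inner_sub_smul_add_sub (ρ : ℝ) (xbar xs xstar lam lamstar : E) :
    2 * ⟪xbar - xs, ρ • (xs - xstar) + (lam - lamstar)⟫
      = 2 * ⟪xbar - xstar, lam⟫ - 2 * ⟪lamstar, xbar⟫
        + 2 * ⟪ρ • (xbar - xs) - lam, xs - xstar⟫ + 2 * ⟪xs, lamstar⟫ := by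
  simp only [inner_add_right, inner_sub_left, inner_sub_right, inner_smul_left,
    inner_smul_right, RCLike.conj_to_real]
  rw [real_inner_comm lamstar, real_inner_comm lam xs, real_inner_comm lam xstar,
    real_inner_comm xs xbar, real_inner_comm xstar xbar]
  ring

theorem Finset.sum_inner_sub_smul_add_sub {ι : Type*} (s : Finset ι) (ρ : ℝ)
    (xbar lam lamstar : ι → E) (xs xstar : E)
    (hbal : ∑ i ∈ s, (ρ • (xbar i - xs) - lam i) = 0) (hstar : ∑ i ∈ s, lamstar i = 0) :
    ∑ i ∈ s, 2 * ⟪xbar i - xs, ρ • (xs - xstar) + (lam i - lamstar i)⟫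
      = 2 * ∑ i ∈ s, ⟪xbar i - xstar, lam i⟫ - 2 * ∑ i ∈ s, ⟪lamstar i, xbar i⟫ := by
  simp only [two_mul_inner_sub_smul_add_sub, Finset.sum_add_distrib, Finset.sum_sub_distrib,
    ← Finset.mul_sum, ← sum_inner, ← inner_sum, hbal, hstar, inner_zero_left, inner_zero_right]
  ring

end InnerProduct

theorem pdmm_key_identity_general {d m : ℕ} (ρ : ℝ) (hρ : 0 < ρ)
    (xsr1 : EuclideanSpace ℝ (Fin d))
    (xbarR xbarR1 lamsiR1 lamisR1 lamisR2 : Fin m → EuclideanSpace ℝ (Fin d))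
    (h2 : xsr1 = (1 / (m : ℝ)) • ∑ i, (xbarR i - (1 / ρ) • lamisR1 i))
    (h3 : ∀ i, lamsiR1 i = ρ • (xbarR i - xsr1) - lamisR1 i)
    (h4 : ∀ i, lamisR2 i = ρ • (xsr1 - xbarR1 i) - lamsiR1 i)
    (xstar : EuclideanSpace ℝ (Fin d)) (lamstar : Fin m → EuclideanSpace ℝ (Fin d))
    (hsum : ∑ i, lamstar i = 0) :
    2 * ∑ i, ⟪xbarR i - xstar, lamisR1 i⟫
      = 2 * ∑ i, ⟪lamstar i, xbarR i⟫
        + ∑ i, 1 / (2 * ρ) * ‖ρ • (xbarR i - xstar) + (lamisR1 i - lamstar i)‖ ^ 2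
        - ∑ i, 1 / (2 * ρ) * ‖ρ • (xbarR1 i - xstar) + (lamisR2 i - lamstar i)‖ ^ 2 := by
  have hρ0 : ρ ≠ 0 := hρ.ne'
  have hbal : ∑ i, (ρ • (xbarR i - xsr1) - lamisR1 i) = 0 := by
    have havg : ∑ i, (xbarR i - (1 / ρ) • lamisR1 i - xsr1) = 0 :=
      Finset.sum_sub_eq_zero_of_eq_average (K := ℝ) (by rwa [Finset.card_univ, Fintype.card_fin])
    calc ∑ i, (ρ • (xbarR i - xsr1) - lamisR1 i)
        = ρ • ∑ i, (xbarR i - (1 / ρ) • lamisR1 i - xsr1) := by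
          simp only [Finset.smul_sum, smul_sub, smul_smul, mul_one_div_cancel hρ0, one_smul]
          exact Finset.sum_congr rfl fun i _ => by abel
      _ = 0 := by rw [havg, smul_zero]
  have hclient : ∀ i, ρ • (xbarR1 i - xstar) + (lamisR2 i - lamstar i)
      = ρ • (xbarR i - xstar) + (lamisR1 i - lamstar i) - (2 * ρ) • (xbarR i - xsr1) := by
    intro i
    rw [h4, h3]
    module
  calc 2 * ∑ i, ⟪xbarR i - xstar, lamisR1 i⟫
      = 2 * ∑ i, ⟪lamstar i, xbarR i⟫
        + ∑ i, 2 * ⟪xbarR i - xsr1, ρ • (xsr1 - xstar) + (lamisR1 i - lamstar i)⟫ := by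
        rw [Finset.sum_inner_sub_smul_add_sub _ ρ _ _ _ _ _ hbal hsum]
        ring
    _ = _ := by
        rw [add_sub_assoc, ← Finset.sum_sub_distrib]
        congr 1
        refine Finset.sum_congr rfl fun i _ => ?_
        rw [hclient, norm_sq_sub_norm_sq_sub_two_mul_smul hρ0]
        congr 2
        module

/-- Lemma 6 of the paper: the key algebraic identity for the GPDMM/PDMM server–client
updates at two consecutive outer iterations. -/
theorem pdmm_key_identity {d m : ℕ} (hm : 0 < m) (ρ : ℝ) (hρ : 0 < ρ)
    (xsr xsr1 : EuclideanSpace ℝ (Fin d))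
    (xbarR xbarR1 lamsiR lamsiR1 lamisR1 lamisR2 : Fin m → EuclideanSpace ℝ (Fin d))
    (h1 : ∀ i, lamisR1 i = ρ • (xsr - xbarR i) - lamsiR i)
    (h2 : xsr1 = (1 / (m : ℝ)) • ∑ i, (xbarR i - (1 / ρ) • lamisR1 i))
    (h3 : ∀ i, lamsiR1 i = ρ • (xbarR i - xsr1) - lamisR1 i)
    (h4 : ∀ i, lamisR2 i = ρ • (xsr1 - xbarR1 i) - lamsiR1 i)
    (xstar : EuclideanSpace ℝ (Fin d)) (lamstar : Fin m → EuclideanSpace ℝ (Fin d))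
    (hsum : ∑ i, lamstar i = 0) :
    2 * ∑ i, ⟪xbarR i - xstar, lamisR1 i⟫
      = 2 * ∑ i, ⟪lamstar i, xbarR i⟫
        + ∑ i, 1 / (2 * ρ) * ‖ρ • (xbarR i - xstar) + (lamisR1 i - lamstar i)‖ ^ 2
        - ∑ i, 1 / (2 * ρ) * ‖ρ • (xbarR1 i - xstar) + (lamisR2 i - lamstar i)‖ ^ 2 :=
  pdmm_key_identity_general ρ hρ xsr1 xbarR xbarR1 lamsiR1 lamisR1 lamisR2 h2 h3 h4 xstar lamstar
    hsum
end

section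
/- Let γ > 0, set ρ = 1/γ, and suppose sequences x_i^r, λ_{i|s}^r (i = 1,…,m), x_s^r, λ_{s|i}^r in ℝ^d satisfy the PDMM server–client updates: x_i^{r+1} minimizes x ↦ f_i(x) + (ρ/2)‖x − x_s^r + λ_{s|i}^r/ρ‖² over ℝ^d; λ_{i|s}^{r+1} = ρ(x_s^r − x_i^{r+1}) − λ_{s|i}^r; x_s^{r+1} = (1/m)∑_{i=1}^m (x_i^{r+1} − λ_{i|s}^{r+1}/ρ); λ_{s|i}^{r+1} = ρ(x_i^{r+1} − x_s^{r+1}) − λ_{i|s}^{r+1}. Define z_{i|s}^r = x_i^r − γλ_{i|s}^r and z_{s|i}^r = x_s^r − γλ_{s|i}^r. Then the transformed iterates satisfy the FedSplit updates: (i) for every x ∈ ℝ^d, f_i(x) + (ρ/2)‖x − x_s^r + λ_{s|i}^r/ρ‖² = f_i(x) + (1/(2γ))‖x − z_{s|i}^r‖², so x_i^{r+1} minimizes x ↦ f_i(x) + (1/(2γ))‖x − z_{s|i}^r‖²; (ii) z_{i|s}^{r+1} = 2x_i^{r+1} − z_{s|i}^r; (iii) x_s^{r+1} = (1/m)∑_{i=1}^m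 z_{i|s}^{r+1}; (iv) z_{s|i}^{r+1} = 2x_s^{r+1} − z_{i|s}^{r+1}. -/
/-! The substitution `z = x − γλ` with `ρ = 1/γ` turns the PDMM penalty
`(ρ/2)‖y − x_s + λ/ρ‖²` into the FedSplit penalty `(1/(2γ))‖y − z‖²`, and since `γρ = 1`
each PDMM dual update `λ' = ρ(a − b) − μ` becomes the reflection `b − γλ' = 2b − (a − γμ)`. -/

theorem objective_add_penalty_eq_of_eq_one_div {E : Type*} [SeminormedAddCommGroup E]
    [NormedSpace ℝ E] (g : E → ℝ) {γ ρ : ℝ} (hρ : ρ = 1 / γ) (y c l : E) :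
    g y + ρ / 2 * ‖y - c + (1 / ρ) • l‖ ^ 2 = g y + 1 / (2 * γ) * ‖y - (c - γ • l)‖ ^ 2 := by
  rw [hρ, one_div_one_div, div_div, mul_comm γ, sub_add]

theorem sub_smul_eq_two_smul_sub_of_mul_eq_one {R E : Type*} [Ring R] [AddCommGroup E]
    [Module R E] {γ ρ : R} (h : γ * ρ = 1) (a b μ : E) :
    b - γ • (ρ • (a - b) - μ) = (2 : R) • b - (a - γ • μ) := by
  rw [smul_sub, smul_smul, h, one_smul, two_smul]
  abel

theorem pdmm_equals_fedsplit_general {d m : ℕ}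
    (f : Fin m → EuclideanSpace ℝ (Fin d) → ℝ)
    (γ ρ : ℝ) (hγ : 0 < γ) (hρ : ρ = 1 / γ)
    (x : Fin m → ℕ → EuclideanSpace ℝ (Fin d))
    (lamis lamsi : Fin m → ℕ → EuclideanSpace ℝ (Fin d))
    (xs : ℕ → EuclideanSpace ℝ (Fin d))
    -- PDMM server–client updates
    (hmin : ∀ i r, ∀ y,
      f i (x i (r + 1)) + ρ / 2 * ‖x i (r + 1) - xs r + (1 / ρ) • lamsi i r‖ ^ 2
        ≤ f i y + ρ / 2 * ‖y - xs r + (1 / ρ) • lamsi i r‖ ^ 2)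
    (hlamis : ∀ i r, lamis i (r + 1) = ρ • (xs r - x i (r + 1)) - lamsi i r)
    (hxs : ∀ r, xs (r + 1) = (1 / (m : ℝ)) • ∑ i, (x i (r + 1) - (1 / ρ) • lamis i (r + 1)))
    (hlamsi : ∀ i r, lamsi i (r + 1) = ρ • (x i (r + 1) - xs (r + 1)) - lamis i (r + 1))
    -- FedSplit auxiliary variables
    (zis zsi : Fin m → ℕ → EuclideanSpace ℝ (Fin d))
    (hzis : ∀ i r, zis i r = x i r - γ • lamis i r)
    (hzsi : ∀ i r, zsi i r = xs r - γ • lamsi i r) :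
    -- (i) the objectives coincide and x i (r+1) minimizes the FedSplit objective
    (∀ i r (y : EuclideanSpace ℝ (Fin d)),
        f i y + ρ / 2 * ‖y - xs r + (1 / ρ) • lamsi i r‖ ^ 2
          = f i y + 1 / (2 * γ) * ‖y - zsi i r‖ ^ 2) ∧
    (∀ i r (y : EuclideanSpace ℝ (Fin d)),
        f i (x i (r + 1)) + 1 / (2 * γ) * ‖x i (r + 1) - zsi i r‖ ^ 2
          ≤ f i y + 1 / (2 * γ) * ‖y - zsi i r‖ ^ 2) ∧
    -- (ii)
    (∀ i r, zis i (r + 1) = (2 : ℝ) • x i (r + 1) - zsi i r) ∧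
    -- (iii)
    (∀ r, xs (r + 1) = (1 / (m : ℝ)) • ∑ i, zis i (r + 1)) ∧
    -- (iv)
    (∀ i r, zsi i (r + 1) = (2 : ℝ) • xs (r + 1) - zis i (r + 1)) := by
  have hobj : ∀ i r y, f i y + ρ / 2 * ‖y - xs r + (1 / ρ) • lamsi i r‖ ^ 2
      = f i y + 1 / (2 * γ) * ‖y - zsi i r‖ ^ 2 := fun i r y => by
    rw [hzsi]
    exact objective_add_penalty_eq_of_eq_one_div (f i) hρ y (xs r) (lamsi i r)
  have hγρ : γ * ρ = 1 := by rw [hρ, mul_one_div_cancel hγ.ne']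
  refine ⟨hobj, fun i r y => ?_, fun i r => ?_, fun r => ?_, fun i r => ?_⟩
  · rw [← hobj, ← hobj]
    exact hmin i r y
  · rw [hzis, hlamis, hzsi]
    exact sub_smul_eq_two_smul_sub_of_mul_eq_one hγρ _ _ _
  · simp only [hxs r, hzis, hρ, one_div_one_div]
  · rw [hzsi, hlamsi, hzis]
    exact sub_smul_eq_two_smul_sub_of_mul_eq_one hγρ _ _ _

/-- Section III of the paper: PDMM applied to the centralized consensus problem is
identical to FedSplit under the change of variables `z = x − γλ` with `ρ = 1/γ`. -/
theorem pdmm_equals_fedsplit {d m : ℕ} (hm : 0 < m)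
    (f : Fin m → EuclideanSpace ℝ (Fin d) → ℝ)
    (γ ρ : ℝ) (hγ : 0 < γ) (hρ : ρ = 1 / γ)
    (x : Fin m → ℕ → EuclideanSpace ℝ (Fin d))
    (lamis lamsi : Fin m → ℕ → EuclideanSpace ℝ (Fin d))
    (xs : ℕ → EuclideanSpace ℝ (Fin d))
    -- PDMM server–client updates
    (hmin : ∀ i r, ∀ y,
      f i (x i (r + 1)) + ρ / 2 * ‖x i (r + 1) - xs r + (1 / ρ) • lamsi i r‖ ^ 2
        ≤ f i y + ρ / 2 * ‖y - xs r + (1 / ρ) • lamsi i r‖ ^ 2)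
    (hlamis : ∀ i r, lamis i (r + 1) = ρ • (xs r - x i (r + 1)) - lamsi i r)
    (hxs : ∀ r, xs (r + 1) = (1 / (m : ℝ)) • ∑ i, (x i (r + 1) - (1 / ρ) • lamis i (r + 1)))
    (hlamsi : ∀ i r, lamsi i (r + 1) = ρ • (x i (r + 1) - xs (r + 1)) - lamis i (r + 1))
    -- FedSplit auxiliary variables
    (zis zsi : Fin m → ℕ → EuclideanSpace ℝ (Fin d))
    (hzis : ∀ i r, zis i r = x i r - γ • lamis i r)
    (hzsi : ∀ i r, zsi i r = xs r - γ • lamsi i r) :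
    -- (i) the objectives coincide and x i (r+1) minimizes the FedSplit objective
    (∀ i r (y : EuclideanSpace ℝ (Fin d)),
        f i y + ρ / 2 * ‖y - xs r + (1 / ρ) • lamsi i r‖ ^ 2
          = f i y + 1 / (2 * γ) * ‖y - zsi i r‖ ^ 2) ∧
    (∀ i r (y : EuclideanSpace ℝ (Fin d)),
        f i (x i (r + 1)) + 1 / (2 * γ) * ‖x i (r + 1) - zsi i r‖ ^ 2
          ≤ f i y + 1 / (2 * γ) * ‖y - zsi i r‖ ^ 2) ∧
    -- (ii)
    (∀ i r, zis i (r + 1) = (2 : ℝ) • x i (r + 1) - zsi i r) ∧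
    -- (iii)
    (∀ r, xs (r + 1) = (1 / (m : ℝ)) • ∑ i, zis i (r + 1)) ∧
    -- (iv)
    (∀ i r, zsi i (r + 1) = (2 : ℝ) • xs (r + 1) - zis i (r + 1)) :=
  pdmm_equals_fedsplit_general f γ ρ hγ hρ x lamis lamsi xs hmin hlamis hxs hlamsi zis zsi hzis hzsi
end

section
/- Let f_i : ℝ^d → ℝ (i = 1,…,m) be differentiable, let η > 0, ρ > 0 with γ = 1/ρ, and let x_s^r ∈ ℝ^d, λ_{s|i}^r ∈ ℝ^d with ∑_{i=1}^m λ_{s|i}^r = 0. Set z_{s|i}^r = x_s^r − λ_{s|i}^r/ρ and define, for each i, one Inexact-FedSplit gradient step started from x_s^r: x_i^{r,1} = x_s^r − η[∇f_i(x_s^r) + (1/γ)(x_s^r − z_{s|i}^r)] = x_s^r − η[∇f_i(x_s^r) + λ_{s|i}^r]; then z_{i|s}^{r+1} = 2x_i^{r,1} − z_{s|i}^r and x_s^{r+1} = (1/m)∑_{i=1}^m z_{i|s}^{r+1}. Then x_s^{r+1} = x_s^r − 2η·(1/m)∑_{i=1}^m ∇f_i(x_s^r). -/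
/-!
Since `1/γ = ρ`, the proximal term `(1/γ)(x_s - z_{s|i})` is exactly the dual estimate `λ_{s|i}`,
so the local step is a gradient step shifted by `λ_{s|i}`. After the reflection
`2 x_i - z_{s|i}` each client's output is `x_s - 2η ∇f_i(x_s)` plus a common multiple of
`λ_{s|i}`, and these dual contributions cancel in the server average because `∑ λ_{s|i} = 0`.
-/

open Finset

section FedSplitAlgebra

variable {𝕜 E : Type*} [Field 𝕜] [AddCommGroup E] [Module 𝕜 E]

theorem smul_sub_sub_one_div_smul {ρ : 𝕜} (hρ : ρ ≠ 0) (x l : E) :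
    ρ • (x - (x - (1 / ρ) • l)) = l := by
  rw [sub_sub_cancel, smul_smul, mul_one_div_cancel hρ, one_smul]

theorem two_smul_sub_gradient_step_sub (x g l : E) (η c : 𝕜) :
    (2 : 𝕜) • (x - η • (g + l)) - (x - c • l) = x - (2 * η) • g + (c - 2 * η) • l := by
  module

theorem one_div_card_smul_sum_of_sum_eq_zero [CharZero 𝕜] {ι : Type*} [Fintype ι] [Nonempty ι]
    (x : E) (g l : ι → E) (a c : 𝕜) (hl : ∑ i, l i = 0) :
    (1 / (Fintype.card ι : 𝕜)) • ∑ i, (x - a • g i + c • l i)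
      = x - a • ((1 / (Fintype.card ι : 𝕜)) • ∑ i, g i) := by
  have hcard : (Fintype.card ι : 𝕜) ≠ 0 := Nat.cast_ne_zero.mpr Fintype.card_ne_zero
  have hsum : ∑ i, (x - a • g i + c • l i) = (Fintype.card ι : 𝕜) • x - a • ∑ i, g i := by
    rw [sum_add_distrib, sum_sub_distrib, ← smul_sum, ← smul_sum, hl, smul_zero, add_zero,
      sum_const, card_univ, Nat.cast_smul_eq_nsmul]
  rw [hsum, smul_sub, smul_smul, one_div_mul_cancel hcard, one_smul, smul_comm]

end FedSplitAlgebra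

theorem inexact_fedsplit_variant_K1_general {d m : ℕ} (hm : 0 < m)
    (f' : Fin m → EuclideanSpace ℝ (Fin d) → EuclideanSpace ℝ (Fin d))
    (η ρ γ : ℝ) (hρ : 0 < ρ) (hγ : γ = 1 / ρ)
    (xsr : EuclideanSpace ℝ (Fin d)) (lamsi : Fin m → EuclideanSpace ℝ (Fin d))
    (hsum : ∑ i, lamsi i = 0)
    (zsi : Fin m → EuclideanSpace ℝ (Fin d))
    (hzsi : ∀ i, zsi i = xsr - (1 / ρ) • lamsi i)
    (xi1 zis1 : Fin m → EuclideanSpace ℝ (Fin d)) (xsr1 : EuclideanSpace ℝ (Fin d))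
    (hxi1 : ∀ i, xi1 i = xsr - η • (f' i xsr + (1 / γ) • (xsr - zsi i)))
    (hzis1 : ∀ i, zis1 i = (2 : ℝ) • xi1 i - zsi i)
    (hxsr1 : xsr1 = (1 / (m : ℝ)) • ∑ i, zis1 i) :
    (∀ i, xi1 i = xsr - η • (f' i xsr + lamsi i)) ∧
      xsr1 = xsr - (2 * η) • ((1 / (m : ℝ)) • ∑ i, f' i xsr) := by
  have hργ : 1 / γ = ρ := by rw [hγ, one_div_one_div]
  have hlocal : ∀ i, xi1 i = xsr - η • (f' i xsr + lamsi i) := fun i ↦ by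
    rw [hxi1, hzsi, hργ, smul_sub_sub_one_div_smul hρ.ne']
  have hreflect : ∀ i, zis1 i = xsr - (2 * η) • f' i xsr + (1 / ρ - 2 * η) • lamsi i :=
    fun i ↦ by rw [hzis1, hlocal, hzsi, two_smul_sub_gradient_step_sub]
  have : Nonempty (Fin m) := Fin.pos_iff_nonempty.mp hm
  refine ⟨hlocal, ?_⟩
  simpa only [hxsr1, hreflect, Fintype.card_fin] using
    one_div_card_smul_sum_of_sum_eq_zero xsr (fun i ↦ f' i xsr) lamsi (2 * η) (1 / ρ - 2 * η) hsum

/-- Remark 2 of the paper: the variant of Inexact FedSplit initialized at the server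
estimate, with K = 1 gradient step, reduces to vanilla gradient descent with step
size 2η. -/
theorem inexact_fedsplit_variant_K1 {d m : ℕ} (hm : 0 < m)
    (f : Fin m → EuclideanSpace ℝ (Fin d) → ℝ)
    (f' : Fin m → EuclideanSpace ℝ (Fin d) → EuclideanSpace ℝ (Fin d))
    (hdiff : ∀ i x, HasGradientAt (f i) (f' i x) x)
    (η ρ γ : ℝ) (hη : 0 < η) (hρ : 0 < ρ) (hγ : γ = 1 / ρ)
    (xsr : EuclideanSpace ℝ (Fin d)) (lamsi : Fin m → EuclideanSpace ℝ (Fin d))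
    (hsum : ∑ i, lamsi i = 0)
    (zsi : Fin m → EuclideanSpace ℝ (Fin d))
    (hzsi : ∀ i, zsi i = xsr - (1 / ρ) • lamsi i)
    (xi1 zis1 : Fin m → EuclideanSpace ℝ (Fin d)) (xsr1 : EuclideanSpace ℝ (Fin d))
    (hxi1 : ∀ i, xi1 i = xsr - η • (f' i xsr + (1 / γ) • (xsr - zsi i)))
    (hzis1 : ∀ i, zis1 i = (2 : ℝ) • xi1 i - zsi i)
    (hxsr1 : xsr1 = (1 / (m : ℝ)) • ∑ i, zis1 i) :
    (∀ i, xi1 i = xsr - η • (f' i xsr + lamsi i)) ∧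
      xsr1 = xsr - (2 * η) • ((1 / (m : ℝ)) • ∑ i, f' i xsr) :=
  inexact_fedsplit_variant_K1_general hm f' η ρ γ hρ hγ xsr lamsi hsum zsi hzsi xi1 zis1 xsr1 hxi1
    hzis1 hxsr1
end
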